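/- arXiv:2502.17803 — 7 statements merged into one kernel-verified Lean document; each statement's English description precedes it below -/
import Mathlib

section
/- On L^1 (random variables with finite mean), the convex order ≤_cx and the †convex order ≤_cx† are equivalent: for all X, Y with E[|X|] < ∞ and E[|Y|] < ∞, X ≤_cx Y if and only if X ≤_cx† Y. Moreover, on L^0 (all random variables), X ≤_cx Y implies X ≤_cx† Y. -/
open MeasureTheory ProbabilityTheory

/-- A measure is atomless: every set of positive measure has a measurable subset of
strictly smaller positive measure. -/
def Atomless {Ω : Type*} {mΩ : MeasurableSpace Ω} (μ : Measure Ω) : Prop :=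
  ∀ s : Set Ω, MeasurableSet s → 0 < μ s →
    ∃ t : Set Ω, MeasurableSet t ∧ t ⊆ s ∧ 0 < μ t ∧ μ t < μ s

/-- Integral of the positive part, in `ℝ≥0∞`. -/
noncomputable def posPartInt {Ω : Type*} {mΩ : MeasurableSpace Ω} (μ : Measure Ω)
    (Z : Ω → ℝ) : ENNReal :=
  ∫⁻ ω, ENNReal.ofReal (Z ω) ∂μ

/-- The expectation `E[Z] = E[Z₊] - E[Z₋]`, valued in `[-∞, ∞]`. -/
noncomputable def eexp {Ω : Type*} {mΩ : MeasurableSpace Ω} (μ : Measure Ω)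
    (Z : Ω → ℝ) : EReal :=
  (posPartInt μ Z : EReal) - (posPartInt μ (fun ω => -Z ω) : EReal)

/-- `E[Z]` is well-defined: `E[Z₊] < ∞` or `E[Z₋] < ∞`. -/
def WellDef {Ω : Type*} {mΩ : MeasurableSpace Ω} (μ : Measure Ω) (Z : Ω → ℝ) : Prop :=
  posPartInt μ Z ≠ ⊤ ∨ posPartInt μ (fun ω => -Z ω) ≠ ⊤

/-- `E[Z]` is finite: `E[Z₊] < ∞` and `E[Z₋] < ∞`. -/
def FiniteExp {Ω : Type*} {mΩ : MeasurableSpace Ω} (μ : Measure Ω) (Z : Ω → ℝ) : Prop :=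
  posPartInt μ Z ≠ ⊤ ∧ posPartInt μ (fun ω => -Z ω) ≠ ⊤

/-- Convex order: `E[u(X)] ≤ E[u(Y)]` for every convex `u` such that both
expectations are well-defined. -/
def ConvexOrd {Ω : Type*} {mΩ : MeasurableSpace Ω} (μ : Measure Ω) (X Y : Ω → ℝ) : Prop :=
  ∀ u : ℝ → ℝ, ConvexOn ℝ Set.univ u →
    WellDef μ (fun ω => u (X ω)) → WellDef μ (fun ω => u (Y ω)) →
    eexp μ (fun ω => u (X ω)) ≤ eexp μ (fun ω => u (Y ω))

/-- †convex order: `E[u(X)] ≤ E[u(Y)]` for every convex `u` such that both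
expectations are finite. -/
def DaggerConvexOrd {Ω : Type*} {mΩ : MeasurableSpace Ω} (μ : Measure Ω) (X Y : Ω → ℝ) : Prop :=
  ∀ u : ℝ → ℝ, ConvexOn ℝ Set.univ u →
    FiniteExp μ (fun ω => u (X ω)) → FiniteExp μ (fun ω => u (Y ω)) →
    eexp μ (fun ω => u (X ω)) ≤ eexp μ (fun ω => u (Y ω))

/-- `(X, Y)` is comonotonic. -/
def Comonotone {Ω : Type*} {mΩ : MeasurableSpace Ω} (μ : Measure Ω) (X Y : Ω → ℝ) : Prop :=
  ∃ (Z : Ω → ℝ) (f g : ℝ → ℝ), Measurable Z ∧ Monotone f ∧ Monotone g ∧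
    X =ᵐ[μ] (fun ω => f (Z ω)) ∧ Y =ᵐ[μ] (fun ω => g (Z ω))

/-- `(X, Y)` is counter-monotonic: `(X, -Y)` is comonotonic. -/
def CounterMonotone {Ω : Type*} {mΩ : MeasurableSpace Ω} (μ : Measure Ω) (X Y : Ω → ℝ) : Prop :=
  Comonotone μ X (fun ω => -Y ω)


section Subgrad

variable {u : ℝ → ℝ}

/-- A subgradient of `u` at `q`: the sup of left slopes. -/
noncomputable def subgrad (u : ℝ → ℝ) (q : ℝ) : ℝ :=
  sSup ((fun x => (u x - u q) / (x - q)) '' Set.Iio q)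

/-- The supporting line of `u` at `q`. -/
noncomputable def supportLine (u : ℝ → ℝ) (q : ℝ) (x : ℝ) : ℝ :=
  u q + subgrad u q * (x - q)

lemma slope_le_slope (hu : ConvexOn ℝ Set.univ u) {q x y : ℝ} (hx : x ≠ q) (hy : y ≠ q)
    (hxy : x ≤ y) : (u x - u q) / (x - q) ≤ (u y - u q) / (y - q) :=
  hu.secant_mono (Set.mem_univ q) (Set.mem_univ x) (Set.mem_univ y) hx hy hxy

lemma bddAbove_slopes (hu : ConvexOn ℝ Set.univ u) (q : ℝ) :
    BddAbove ((fun x => (u x - u q) / (x - q)) '' Set.Iio q) := by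
  refine ⟨(u (q + 1) - u q) / (q + 1 - q), ?_⟩
  rintro s ⟨x, hx, rfl⟩
  exact slope_le_slope hu (ne_of_lt hx) (by norm_num) (by linarith [hx.out])

lemma le_subgrad (hu : ConvexOn ℝ Set.univ u) {q x : ℝ} (hx : x < q) :
    (u x - u q) / (x - q) ≤ subgrad u q :=
  le_csSup (bddAbove_slopes hu q) ⟨x, hx, rfl⟩

lemma subgrad_le (hu : ConvexOn ℝ Set.univ u) {q x : ℝ} (hx : q < x) :
    subgrad u q ≤ (u x - u q) / (x - q) := by
  refine csSup_le ⟨(u (q - 1) - u q) / (q - 1 - q), ⟨q - 1, by norm_num, rfl⟩⟩ ?_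
  rintro s ⟨y, hy, rfl⟩
  exact slope_le_slope hu (ne_of_lt hy.out) (ne_of_gt hx) (by linarith [hy.out])

lemma supportLine_le (hu : ConvexOn ℝ Set.univ u) (q x : ℝ) : supportLine u q x ≤ u x := by
  have key : subgrad u q * (x - q) ≤ u x - u q := by
    rcases lt_trichotomy x q with h | h | h
    · have h1 := le_subgrad hu h
      have h2 := mul_le_mul_of_nonpos_right h1 (by linarith : x - q ≤ 0)
      rwa [div_mul_cancel₀ _ (by linarith : x - q ≠ 0)] at h2
    · simp [h]
    · have h1 := subgrad_le hu h
      have h2 := mul_le_mul_of_nonneg_right h1 (by linarith : (0:ℝ) ≤ x - q)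
      rwa [div_mul_cancel₀ _ (by linarith : x - q ≠ 0)] at h2
  simpa [supportLine] using by linarith

lemma supportLine_self (u : ℝ → ℝ) (q : ℝ) : supportLine u q q = u q := by
  simp [supportLine]

lemma supportLine_convexOn (u : ℝ → ℝ) (q : ℝ) : ConvexOn ℝ Set.univ (supportLine u q) := by
  refine ⟨convex_univ, fun x _ y _ a b ha hb hab => le_of_eq ?_⟩
  simp only [supportLine, smul_eq_mul]
  linear_combination (subgrad u q * q - u q) * hab

lemma supportLine_continuous (u : ℝ → ℝ) (q : ℝ) : Continuous (supportLine u q) := by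
  unfold supportLine; fun_prop

lemma abs_supportLine_le (u : ℝ → ℝ) (q x : ℝ) :
    |supportLine u q x| ≤ (|u q| + |subgrad u q| * |q|) + |subgrad u q| * |x| := by
  have h1 : |supportLine u q x| ≤ |u q| + |subgrad u q| * |x - q| := by
    refine (abs_add_le _ _).trans ?_
    rw [abs_mul]
  have h2 : |x - q| ≤ |x| + |q| := abs_sub _ _
  nlinarith [abs_nonneg (subgrad u q)]

end Subgrad

section Approx
variable {u : ℝ → ℝ}

/-- enumeration of the rationals inside ℝ -/
noncomputable def ratSeq : ℕ → ℝ := fun n => ((Denumerable.ofNat ℚ n : ℚ) : ℝ)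

/-- increasing approximations: max of finitely many supporting lines -/
noncomputable def approxSeq (u : ℝ → ℝ) : ℕ → ℝ → ℝ
  | 0 => supportLine u (ratSeq 0)
  | n + 1 => fun x => max (approxSeq u n x) (supportLine u (ratSeq (n + 1)) x)

lemma approxSeq_mono (u : ℝ → ℝ) : Monotone (approxSeq u) := by
  refine monotone_nat_of_le_succ fun n x => ?_
  exact le_max_left _ _

lemma supportLine_le_approxSeq (u : ℝ → ℝ) {i n : ℕ} (h : i ≤ n) (x : ℝ) :
    supportLine u (ratSeq i) x ≤ approxSeq u n x := by
  induction n with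
  | zero => simp_all [approxSeq, Nat.le_zero.mp h]
  | succ n ih =>
    rcases Nat.le_succ_iff.mp h with h' | h'
    · exact (ih h').trans (le_max_left _ _)
    · subst h'; exact le_max_right _ _

lemma approxSeq_convexOn (hline : ∀ q, ConvexOn ℝ Set.univ (supportLine u q)) (n : ℕ) :
    ConvexOn ℝ Set.univ (approxSeq u n) := by
  induction n with
  | zero => exact hline _
  | succ n ih => exact ih.sup (hline _)

lemma approxSeq_continuous (u : ℝ → ℝ) (hline : ∀ q, Continuous (supportLine u q)) (n : ℕ) :
    Continuous (approxSeq u n) := by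
  induction n with
  | zero => exact hline _
  | succ n ih => exact ih.max (hline _)

lemma approxSeq_le (hle : ∀ q x, supportLine u q x ≤ u x) (n : ℕ) (x : ℝ) :
    approxSeq u n x ≤ u x := by
  induction n with
  | zero => exact hle _ _
  | succ n ih => exact max_le ih (hle _ _)

lemma approxSeq_growth (u : ℝ → ℝ)
    (hline : ∀ q, ∃ K M : ℝ, 0 ≤ M ∧ ∀ x, |supportLine u q x| ≤ K + M * |x|) (n : ℕ) :
    ∃ K M : ℝ, 0 ≤ M ∧ ∀ x, |approxSeq u n x| ≤ K + M * |x| := by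
  induction n with
  | zero => exact hline _
  | succ n ih =>
    obtain ⟨K, M, hM, hKM⟩ := ih
    obtain ⟨K', M', hM', hKM'⟩ := hline (ratSeq (n + 1))
    refine ⟨max K K', max M M', le_max_of_le_left hM, fun x => ?_⟩
    have h1 := (abs_max_le_max_abs_abs (a := approxSeq u n x) (b := supportLine u (ratSeq (n+1)) x))
    have h2 := hKM x; have h3 := hKM' x
    have hx := abs_nonneg x
    refine h1.trans (max_le ?_ ?_) <;> nlinarith [le_max_left K K', le_max_right K K',
      le_max_left M M', le_max_right M M']

end Approx

section Dense
variable {u : ℝ → ℝ}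

lemma subgrad_abs_bound (hu : ConvexOn ℝ Set.univ u) {x q R : ℝ}
    (hq : q ∈ Set.Ioo (x - 1) (x + 1)) (hR : ∀ z ∈ Set.Icc (x - 2) (x + 2), |u z| ≤ R) :
    |subgrad u q| ≤ 2 * R := by
  obtain ⟨hq1, hq2⟩ := hq
  have hR0 : 0 ≤ R := (abs_nonneg _).trans (hR x (by constructor <;> linarith))
  have huq : |u q| ≤ R := hR q (by constructor <;> linarith)
  have hup : |u (x + 2)| ≤ R := hR (x + 2) (by constructor <;> linarith)
  have hum : |u (x - 2)| ≤ R := hR (x - 2) (by constructor <;> linarith)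
  rw [abs_le] at huq hup hum ⊢
  constructor
  · have h1 : (u (x - 2) - u q) / (x - 2 - q) ≤ subgrad u q := le_subgrad hu (by linarith)
    have h2 : -(2 * R) ≤ (u (x - 2) - u q) / (x - 2 - q) := by
      have he : (u (x - 2) - u q) / (x - 2 - q) = (u q - u (x - 2)) / (q - (x - 2)) := by
        rw [← neg_div_neg_eq]; ring_nf
      rw [he, le_div_iff₀ (by linarith : (0:ℝ) < q - (x - 2))]
      nlinarith
    linarith
  · have h1 : subgrad u q ≤ (u (x + 2) - u q) / (x + 2 - q) := subgrad_le hu (by linarith)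
    have h2 : (u (x + 2) - u q) / (x + 2 - q) ≤ 2 * R := by
      rw [div_le_iff₀ (by linarith : (0:ℝ) < x + 2 - q)]
      nlinarith
    linarith

lemma approxSeq_dense (hu : ConvexOn ℝ Set.univ u) (x : ℝ) {ε : ℝ} (hε : 0 < ε) :
    ∃ n, u x - ε < approxSeq u n x := by
  have hc : Continuous u := continuousOn_univ.mp (hu.continuousOn isOpen_univ)
  obtain ⟨R, hR⟩ := (isCompact_Icc :
    IsCompact (Set.Icc (x - 2) (x + 2))).exists_bound_of_continuousOn hc.continuousOn
  simp only [Real.norm_eq_abs] at hR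
  have hR0 : 0 ≤ R := (abs_nonneg _).trans (hR x (by constructor <;> linarith))
  obtain ⟨δ, hδ0, hδ⟩ := Metric.continuousAt_iff.mp hc.continuousAt (ε / 2) (by linarith)
  set η := min δ (min 1 (ε / (2 * (2 * R + 1)))) with hηdef
  have hη0 : 0 < η := by
    refine lt_min hδ0 (lt_min one_pos ?_)
    positivity
  obtain ⟨q, hq⟩ := exists_rat_near x hη0
  have hη1 : η ≤ 1 := (min_le_right _ _).trans (min_le_left _ _)
  have hη2 : η ≤ δ := min_le_left _ _
  have hη3 : η ≤ ε / (2 * (2 * R + 1)) := (min_le_right _ _).trans (min_le_right _ _)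
  have hcq : |subgrad u (q : ℝ)| ≤ 2 * R := by
    refine subgrad_abs_bound hu ⟨?_, ?_⟩ hR <;>
      [skip; skip] <;> cases' abs_lt.mp hq with h1 h2 <;> linarith
  have huq : |u (q : ℝ) - u x| < ε / 2 := by
    have := hδ (show dist ((q : ℝ)) x < δ by
      rw [Real.dist_eq, abs_sub_comm]; exact hq.trans_le hη2)
    rwa [Real.dist_eq] at this
  obtain ⟨m, hm⟩ : ∃ m, Denumerable.ofNat ℚ m = q := ⟨_, Denumerable.ofNat_encode q⟩
  obtain ⟨n, hn⟩ : ∃ n, ratSeq n = (q : ℝ) := ⟨m, by rw [ratSeq, hm]⟩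
  refine ⟨n, lt_of_lt_of_le ?_ (hn ▸ supportLine_le_approxSeq u le_rfl x)⟩
  have h1 : |subgrad u (q : ℝ) * (x - (q : ℝ))| ≤ 2 * R * η := by
    rw [abs_mul]
    have := abs_nonneg (x - (q:ℝ))
    have h2 : |x - (q : ℝ)| ≤ η := hq.le
    nlinarith [abs_nonneg (subgrad u (q:ℝ))]
  have h2 : 2 * R * η ≤ ε / 2 := by
    have h3 : 2 * R * η ≤ 2 * R * (ε / (2 * (2 * R + 1))) := by nlinarith
    have h4 : 2 * R * (ε / (2 * (2 * R + 1))) ≤ ε / 2 := by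
      set t := ε / (2 * (2 * R + 1)) with htdef
      have ht : t * (2 * (2 * R + 1)) = ε := div_mul_cancel₀ _ (by positivity)
      have ht0 : 0 < t := by positivity
      nlinarith
    linarith
  have h5 := abs_lt.mp huq
  have h6 := abs_le.mp h1
  simp only [supportLine]
  linarith [h5.1, h6.1]

end Dense

section Main

open scoped ENNReal NNReal

variable {Ω : Type*} [MeasurableSpace Ω] {μ : Measure Ω}

lemma coe_ennreal_eq_coe_toReal {a : ℝ≥0∞} (ha : a ≠ ⊤) :
    (a : EReal) = ((a.toReal : ℝ) : EReal) := by
  rw [← EReal.toReal_coe_ennreal (x := a), EReal.coe_toReal]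
  · simpa [EReal.coe_ennreal_eq_top_iff] using ha
  · exact (EReal.coe_ennreal_ne_bot a)

lemma eexp_mono {f g : Ω → ℝ} (h : ∀ ω, f ω ≤ g ω) : eexp μ f ≤ eexp μ g := by
  unfold eexp
  refine EReal.sub_le_sub ?_ ?_
  · exact EReal.coe_ennreal_le_coe_ennreal_iff.2
      (lintegral_mono fun ω => ENNReal.ofReal_le_ofReal (h ω))
  · exact EReal.coe_ennreal_le_coe_ennreal_iff.2
      (lintegral_mono fun ω => ENNReal.ofReal_le_ofReal (by simpa using h ω))

lemma eexp_eq_coe {f : Ω → ℝ} (hf : FiniteExp μ f) :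
    eexp μ f = (((posPartInt μ f).toReal - (posPartInt μ (fun ω => -f ω)).toReal : ℝ) : EReal) := by
  unfold eexp
  rw [coe_ennreal_eq_coe_toReal hf.1, coe_ennreal_eq_coe_toReal hf.2, ← EReal.coe_sub]

lemma eexp_eq_top {f : Ω → ℝ} (hp : posPartInt μ f = ⊤)
    (hn : posPartInt μ (fun ω => -f ω) ≠ ⊤) : eexp μ f = ⊤ := by
  unfold eexp
  rw [hp, coe_ennreal_eq_coe_toReal hn, EReal.coe_ennreal_top, EReal.top_sub_coe]

lemma absInt_ne_top {X : Ω → ℝ} (hX : Measurable X) (hfX : FiniteExp μ X) :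
    ∫⁻ ω, ENNReal.ofReal |X ω| ∂μ ≠ ⊤ := by
  have h1 : ∫⁻ ω, ENNReal.ofReal |X ω| ∂μ ≤
      ∫⁻ ω, (ENNReal.ofReal (X ω) + ENNReal.ofReal (-X ω)) ∂μ := by
    refine lintegral_mono fun ω => ?_
    rcases le_total 0 (X ω) with h | h
    · rw [abs_of_nonneg h]; exact le_add_right le_rfl
    · rw [abs_of_nonpos h]; exact le_add_left le_rfl
  rw [lintegral_add_left hX.ennreal_ofReal] at h1
  exact ne_top_of_le_ne_top (ENNReal.add_ne_top.mpr ⟨hfX.1, hfX.2⟩) h1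

lemma growth_int [IsFiniteMeasure μ] {X f : Ω → ℝ} (hX : Measurable X)
    (habs : ∫⁻ ω, ENNReal.ofReal |X ω| ∂μ ≠ ⊤) (K M : ℝ) (hM : 0 ≤ M)
    (hf : ∀ ω, f ω ≤ K + M * |X ω|) : posPartInt μ f ≠ ⊤ := by
  have h1 : posPartInt μ f ≤
      ∫⁻ ω, (ENNReal.ofReal K + ENNReal.ofReal M * ENNReal.ofReal |X ω|) ∂μ := by
    refine lintegral_mono fun ω => ?_
    calc ENNReal.ofReal (f ω) ≤ ENNReal.ofReal (K + M * |X ω|) :=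
          ENNReal.ofReal_le_ofReal (hf ω)
      _ ≤ ENNReal.ofReal K + ENNReal.ofReal (M * |X ω|) := ENNReal.ofReal_add_le
      _ = ENNReal.ofReal K + ENNReal.ofReal M * ENNReal.ofReal |X ω| := by
          rw [ENNReal.ofReal_mul hM]
  rw [lintegral_add_left measurable_const, lintegral_const,
    lintegral_const_mul _ hX.abs.ennreal_ofReal] at h1
  exact ne_top_of_le_ne_top (ENNReal.add_ne_top.mpr
    ⟨ENNReal.mul_ne_top ENNReal.ofReal_ne_top (measure_ne_top μ _),
     ENNReal.mul_ne_top ENNReal.ofReal_ne_top habs⟩) h1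

lemma dagger_imp_convex (μ : Measure Ω) [IsProbabilityMeasure μ]
    {X Y : Ω → ℝ} (hX : Measurable X) (hY : Measurable Y)
    (hfX : FiniteExp μ X) (hfY : FiniteExp μ Y) (hd : DaggerConvexOrd μ X Y) :
    ConvexOrd μ X Y := by
  intro u hu _ _
  have habsX : ∫⁻ ω, ENNReal.ofReal |X ω| ∂μ ≠ ⊤ := absInt_ne_top hX hfX
  have habsY : ∫⁻ ω, ENNReal.ofReal |Y ω| ∂μ ≠ ⊤ := absInt_ne_top hY hfY
  have hline_le : ∀ q x, supportLine u q x ≤ u x := fun q x => supportLine_le hu q x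
  have happle : ∀ n x, approxSeq u n x ≤ u x := approxSeq_le hline_le
  have hgrowth : ∀ n, ∃ K M : ℝ, 0 ≤ M ∧ ∀ x, |approxSeq u n x| ≤ K + M * |x| :=
    approxSeq_growth u (fun q => ⟨_, _, abs_nonneg _, abs_supportLine_le u q⟩)
  have hfin : ∀ (n : ℕ) (Z : Ω → ℝ), Measurable Z →
      (∫⁻ ω, ENNReal.ofReal |Z ω| ∂μ ≠ ⊤) →
      FiniteExp μ (fun ω => approxSeq u n (Z ω)) := by
    intro n Z hZ habs
    obtain ⟨K, M, hM, hKM⟩ := hgrowth n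
    exact ⟨growth_int hZ habs K M hM (fun ω => (le_abs_self _).trans (hKM (Z ω))),
      growth_int hZ habs K M hM (fun ω => (neg_le_abs _).trans (hKM (Z ω)))⟩
  have hneg : ∀ (Z : Ω → ℝ), Measurable Z → (∫⁻ ω, ENNReal.ofReal |Z ω| ∂μ ≠ ⊤) →
      posPartInt μ (fun ω => -(u (Z ω))) ≠ ⊤ := by
    intro Z hZ habs
    obtain ⟨K, M, hM, hKM⟩ := hgrowth 0
    refine growth_int hZ habs K M hM (fun ω => ?_)
    have h1 : approxSeq u 0 (Z ω) ≤ u (Z ω) := happle 0 _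
    have h2 := (abs_le.mp (hKM (Z ω))).1
    linarith
  have hnegX := hneg X hX habsX
  have hnegY := hneg Y hY habsY
  by_cases hposY : posPartInt μ (fun ω => u (Y ω)) = ⊤
  · rw [eexp_eq_top hposY hnegY]; exact le_top
  -- the positive part of u ∘ X is finite
  have hmeas : ∀ n, Measurable fun ω => ENNReal.ofReal (approxSeq u n (X ω)) := fun n =>
    (((approxSeq_continuous u (supportLine_continuous u) n).measurable).comp hX).ennreal_ofReal
  have hmono : Monotone fun n => fun ω => ENNReal.ofReal (approxSeq u n (X ω)) :=
    fun n m hnm ω => ENNReal.ofReal_le_ofReal (approxSeq_mono u hnm (X ω))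
  have hsup : posPartInt μ (fun ω => u (X ω)) =
      ⨆ n, posPartInt μ (fun ω => approxSeq u n (X ω)) := by
    unfold posPartInt
    rw [← lintegral_iSup hmeas hmono]
    refine lintegral_congr fun ω => ?_
    refine le_antisymm ?_ (iSup_le fun n => ENNReal.ofReal_le_ofReal (happle n (X ω)))
    refine ENNReal.le_of_forall_pos_le_add fun ε hε _ => ?_
    obtain ⟨n, hn⟩ := approxSeq_dense hu (X ω) (show (0:ℝ) < (ε : ℝ) by exact_mod_cast hε)
    calc ENNReal.ofReal (u (X ω)) ≤ ENNReal.ofReal (approxSeq u n (X ω) + ε) :=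
          ENNReal.ofReal_le_ofReal (by linarith)
      _ ≤ ENNReal.ofReal (approxSeq u n (X ω)) + ENNReal.ofReal ε := ENNReal.ofReal_add_le
      _ ≤ (⨆ m, ENNReal.ofReal (approxSeq u m (X ω))) + ε := by
          gcongr
          · exact le_iSup (fun m => ENNReal.ofReal (approxSeq u m (X ω))) n
          · exact le_of_eq ENNReal.ofReal_coe_nnreal
  set C : ℝ≥0∞ := posPartInt μ (fun ω => -(approxSeq u 0 (X ω))) with hC
  have hCtop : C ≠ ⊤ := (hfin 0 X hX habsX).2
  set B : ℝ := (posPartInt μ (fun ω => u (Y ω))).toReal + C.toReal with hB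
  have hbound : ∀ n, posPartInt μ (fun ω => approxSeq u n (X ω)) ≤ ENNReal.ofReal B := by
    intro n
    have hXfin := hfin n X hX habsX
    have hYfin := hfin n Y hY habsY
    have h1 : eexp μ (fun ω => approxSeq u n (X ω)) ≤ eexp μ (fun ω => u (Y ω)) := by
      refine le_trans (hd (approxSeq u n)
        (approxSeq_convexOn (supportLine_convexOn u) n) hXfin hYfin) ?_
      exact eexp_mono fun ω => happle n (Y ω)
    rw [eexp_eq_coe hXfin, eexp_eq_coe ⟨hposY, hnegY⟩, EReal.coe_le_coe_iff] at h1
    have h2 : (posPartInt μ (fun ω => -(approxSeq u n (X ω)))).toReal ≤ C.toReal := by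
      refine ENNReal.toReal_mono hCtop (lintegral_mono fun ω => ?_)
      exact ENNReal.ofReal_le_ofReal (by simpa using approxSeq_mono u (Nat.zero_le n) (X ω))
    have h3 : (0:ℝ) ≤ (posPartInt μ (fun ω => -(u (Y ω)))).toReal := ENNReal.toReal_nonneg
    have h4 : (posPartInt μ (fun ω => approxSeq u n (X ω))).toReal ≤ B := by
      rw [hB]; linarith
    calc posPartInt μ (fun ω => approxSeq u n (X ω))
        = ENNReal.ofReal (posPartInt μ (fun ω => approxSeq u n (X ω))).toReal :=
          (ENNReal.ofReal_toReal hXfin.1).symm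
      _ ≤ ENNReal.ofReal B := ENNReal.ofReal_le_ofReal h4
  have hposX : posPartInt μ (fun ω => u (X ω)) ≠ ⊤ := by
    rw [hsup]
    exact ne_top_of_le_ne_top ENNReal.ofReal_ne_top (iSup_le hbound)
  exact hd u hu ⟨hposX, hnegX⟩ ⟨hposY, hnegY⟩

end Main

/-- On L¹, the convex order and the †convex order are equivalent; on L⁰, the convex
order implies the †convex order. -/
theorem convexOrd_iff_daggerConvexOrd_of_finiteExp
    {Ω : Type*} [MeasurableSpace Ω] (μ : Measure Ω) [IsProbabilityMeasure μ]
    (hμ : Atomless μ) :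
    (∀ X Y : Ω → ℝ, Measurable X → Measurable Y → FiniteExp μ X → FiniteExp μ Y →
      (ConvexOrd μ X Y ↔ DaggerConvexOrd μ X Y)) ∧
    (∀ X Y : Ω → ℝ, Measurable X → Measurable Y →
      ConvexOrd μ X Y → DaggerConvexOrd μ X Y) := by
  have triv : ∀ X Y : Ω → ℝ, ConvexOrd μ X Y → DaggerConvexOrd μ X Y := by
    intro X Y h u hu hfx hfy
    exact h u hu (Or.inl hfx.1) (Or.inl hfy.1)
  refine ⟨fun X Y hX hY hfX hfY => ⟨triv X Y, fun hd => ?_⟩, fun X Y _ _ h => triv X Y h⟩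
  exact dagger_imp_convex μ hX hY hfX hfY hd
end

section
/- Let X and Y be random variables with X ≥ 0 almost surely, E[X] = ∞, Y ≤ 0 almost surely, and E[Y₋] = ∞. Then both X ≤_cx† Y and Y ≤_cx† X hold, while neither X ≤_cx Y nor Y ≤_cx X holds. Consequently, on L^0 the †convex order does not imply the convex order, and the †convex order fails antisymmetry. -/
open MeasureTheory ProbabilityTheory

lemma antitone_of_convex_posPart_finite {Ω : Type*} [MeasurableSpace Ω] (μ : Measure Ω)
    [IsProbabilityMeasure μ] (X : Ω → ℝ)
    (hXinf : ∫⁻ ω, ENNReal.ofReal (X ω) ∂μ = ⊤)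
    (u : ℝ → ℝ) (hu : ConvexOn ℝ Set.univ u)
    (hfin : ∫⁻ ω, ENNReal.ofReal (u (X ω)) ∂μ ≠ ⊤) : Antitone u := by
  by_contra h
  rw [Antitone] at h
  push_neg at h
  obtain ⟨a, b, hab, hlt⟩ := h
  have hab' : a < b := lt_of_le_of_ne hab (by rintro rfl; exact lt_irrefl _ hlt)
  set s : ℝ := (u b - u a) / (b - a) with hs_def
  have hs : 0 < s := div_pos (sub_pos.2 hlt) (sub_pos.2 hab')
  set c : ℝ := s * b - u b with hc_def
  have key : ∀ x, b ≤ x → s * x - c ≤ u x := by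
    intro x hx
    rcases eq_or_lt_of_le hx with rfl | hx'
    · simp [hc_def]
    · have := hu.slope_mono_adjacent (Set.mem_univ a) (Set.mem_univ x) hab' hx'
      rw [← hs_def] at this
      have hxb : 0 < x - b := sub_pos.2 hx'
      have h2 : s * (x - b) ≤ u x - u b := (le_div_iff₀ hxb).mp this
      simp only [hc_def]; nlinarith
  have bound : ∀ ω, ENNReal.ofReal (s * X ω - c) ≤
      ENNReal.ofReal (u (X ω)) + ENNReal.ofReal (s * b - c) := by
    intro ω
    rcases le_or_gt b (X ω) with h | h
    · exact le_trans (ENNReal.ofReal_le_ofReal (key _ h)) le_self_add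
    · refine le_trans (ENNReal.ofReal_le_ofReal ?_) le_add_self
      nlinarith
  have h1 : ∫⁻ ω, ENNReal.ofReal (s * X ω - c) ∂μ ≠ ⊤ := by
    have : ∫⁻ ω, ENNReal.ofReal (s * X ω - c) ∂μ ≤
        ∫⁻ ω, ENNReal.ofReal (u (X ω)) ∂μ + ENNReal.ofReal (s * b - c) := by
      calc ∫⁻ ω, ENNReal.ofReal (s * X ω - c) ∂μ
          ≤ ∫⁻ ω, (ENNReal.ofReal (u (X ω)) + ENNReal.ofReal (s * b - c)) ∂μ :=
            lintegral_mono bound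
        _ = ∫⁻ ω, ENNReal.ofReal (u (X ω)) ∂μ + ENNReal.ofReal (s * b - c) := by
            rw [lintegral_add_right _ measurable_const, lintegral_const, measure_univ, mul_one]
    exact ne_top_of_le_ne_top (ENNReal.add_ne_top.2 ⟨hfin, ENNReal.ofReal_ne_top⟩) this
  have h2 : ∫⁻ ω, ENNReal.ofReal (s * X ω) ∂μ = ⊤ := by
    have heq : ∀ ω, ENNReal.ofReal (s * X ω) = ENNReal.ofReal s * ENNReal.ofReal (X ω) :=
      fun ω => ENNReal.ofReal_mul hs.le
    simp_rw [heq]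
    rw [lintegral_const_mul' _ _ ENNReal.ofReal_ne_top, hXinf, ENNReal.mul_top]
    simpa [ENNReal.ofReal_eq_zero, not_le] using hs
  have h3 : (⊤ : ENNReal) ≤ ∫⁻ ω, ENNReal.ofReal (s * X ω - c) ∂μ + ENNReal.ofReal c := by
    rw [← h2]
    calc ∫⁻ ω, ENNReal.ofReal (s * X ω) ∂μ
        ≤ ∫⁻ ω, (ENNReal.ofReal (s * X ω - c) + ENNReal.ofReal c) ∂μ := by
          refine lintegral_mono fun ω => ?_
          exact le_trans
            (le_of_eq (congrArg ENNReal.ofReal (by ring : s * X ω = (s * X ω - c) + c)))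
            ENNReal.ofReal_add_le
      _ = ∫⁻ ω, ENNReal.ofReal (s * X ω - c) ∂μ + ENNReal.ofReal c := by
          rw [lintegral_add_right _ measurable_const, lintegral_const, measure_univ, mul_one]
  have : ∫⁻ ω, ENNReal.ofReal (s * X ω - c) ∂μ = ⊤ := by
    by_contra hne
    exact absurd (top_le_iff.mp h3)
      (ENNReal.add_ne_top.2 ⟨hne, ENNReal.ofReal_ne_top⟩)
  exact h1 this

/-- For `X ≥ 0` a.s. with `E[X] = ∞` and `Y ≤ 0` a.s. with `E[Y₋] = ∞`, both
`X ≤_cx† Y` and `Y ≤_cx† X` hold, while neither `X ≤_cx Y` nor `Y ≤_cx X` holds. -/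
theorem daggerConvexOrd_not_convexOrd
    {Ω : Type*} [MeasurableSpace Ω] (μ : Measure Ω) [IsProbabilityMeasure μ]
    (hμ : Atomless μ) (X Y : Ω → ℝ) (hX : Measurable X) (hY : Measurable Y)
    (hX0 : ∀ᵐ ω ∂μ, 0 ≤ X ω) (hXinf : posPartInt μ X = ⊤)
    (hY0 : ∀ᵐ ω ∂μ, Y ω ≤ 0) (hYinf : posPartInt μ (fun ω => -Y ω) = ⊤) :
    DaggerConvexOrd μ X Y ∧ DaggerConvexOrd μ Y X ∧
      ¬ ConvexOrd μ X Y ∧ ¬ ConvexOrd μ Y X := by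
  -- positive parts of `-X` and of `Y` vanish
  have hnX : (∫⁻ ω, ENNReal.ofReal (-(X ω)) ∂μ) = 0 := by
    have : (fun ω => ENNReal.ofReal (-(X ω))) =ᵐ[μ] fun _ => 0 :=
      hX0.mono fun ω h => by simp [ENNReal.ofReal_eq_zero]; linarith
    rw [lintegral_congr_ae this, lintegral_zero]
  have hpY : (∫⁻ ω, ENNReal.ofReal (Y ω) ∂μ) = 0 := by
    have : (fun ω => ENNReal.ofReal (Y ω)) =ᵐ[μ] fun _ => 0 :=
      hY0.mono fun ω h => by simp [ENNReal.ofReal_eq_zero]; linarith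
    rw [lintegral_congr_ae this, lintegral_zero]
  -- any convex u with both expectations finite is constant
  have hconst : ∀ u : ℝ → ℝ, ConvexOn ℝ Set.univ u →
      FiniteExp μ (fun ω => u (X ω)) → FiniteExp μ (fun ω => u (Y ω)) →
      ∀ x, u x = u 0 := by
    intro u hu hfX hfY x
    have hanti : Antitone u :=
      antitone_of_convex_posPart_finite μ X hXinf u hu hfX.1
    have hv : ConvexOn ℝ Set.univ (fun x => u (-x)) := by
      refine ⟨convex_univ, fun p _ q _ a b ha hb hab => ?_⟩
      have := hu.2 (Set.mem_univ (-p)) (Set.mem_univ (-q)) ha hb hab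
      have e : a • -p + b • -q = -(a • p + b • q) := by
        simp only [smul_eq_mul]; ring
      rw [e] at this
      exact this
    have hanti' : Antitone (fun x => u (-x)) :=
      antitone_of_convex_posPart_finite μ (fun ω => -Y ω) hYinf _ hv
        (by simpa [posPartInt] using hfY.1)
    have hmono : Monotone u := fun p q hpq => by
      simpa using hanti' (neg_le_neg hpq)
    rcases le_total x 0 with h | h
    · exact le_antisymm (hmono h) (hanti h)
    · exact le_antisymm (hanti h) (hmono h)
  have hdag : ∀ u : ℝ → ℝ, ConvexOn ℝ Set.univ u →
      FiniteExp μ (fun ω => u (X ω)) → FiniteExp μ (fun ω => u (Y ω)) →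
      eexp μ (fun ω => u (X ω)) = eexp μ (fun ω => u (Y ω)) := by
    intro u hu hfX hfY
    have heq : (fun ω => u (X ω)) = fun ω => u (Y ω) :=
      funext fun ω => (hconst u hu hfX hfY (X ω)).trans (hconst u hu hfX hfY (Y ω)).symm
    rw [heq]
  refine ⟨fun u hu h1 h2 => le_of_eq (hdag u hu h1 h2),
    fun u hu h1 h2 => le_of_eq (hdag u hu h2 h1).symm, ?_, ?_⟩
  · intro h
    have := h id (convexOn_id convex_univ)
      (Or.inr (by
        show (∫⁻ ω, ENNReal.ofReal (-(X ω)) ∂μ) ≠ ⊤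
        rw [hnX]; exact ENNReal.zero_ne_top))
      (Or.inl (by
        show (∫⁻ ω, ENNReal.ofReal (Y ω) ∂μ) ≠ ⊤
        rw [hpY]; exact ENNReal.zero_ne_top))
    simp only [id_eq] at this
    rw [show eexp μ (fun ω => X ω) = ⊤ by
        unfold eexp posPartInt
        rw [show (∫⁻ ω, ENNReal.ofReal ((fun ω => X ω) ω) ∂μ) = ⊤ from hXinf]
        rw [show (∫⁻ ω, ENNReal.ofReal (-(fun ω => X ω) ω) ∂μ) = 0 from hnX]
        simp,
      show eexp μ (fun ω => Y ω) = ⊥ by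
        unfold eexp posPartInt
        rw [show (∫⁻ ω, ENNReal.ofReal ((fun ω => Y ω) ω) ∂μ) = 0 from hpY]
        rw [show (∫⁻ ω, ENNReal.ofReal (-(fun ω => Y ω) ω) ∂μ) = ⊤ from hYinf]
        simp] at this
    exact absurd this (by simp)
  · intro h
    have hneg : ConvexOn ℝ Set.univ (fun x : ℝ => -x) := by
      refine ⟨convex_univ, fun p _ q _ a b ha hb hab => le_of_eq ?_⟩
      simp only [smul_eq_mul]; ring
    have := h (fun x => -x) hneg
      (Or.inr (by
        show (∫⁻ ω, ENNReal.ofReal (-(-(Y ω))) ∂μ) ≠ ⊤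
        simp_rw [neg_neg]
        rw [hpY]; exact ENNReal.zero_ne_top))
      (Or.inl (by
        show (∫⁻ ω, ENNReal.ofReal (-(X ω)) ∂μ) ≠ ⊤
        rw [hnX]; exact ENNReal.zero_ne_top))
    rw [show eexp μ (fun ω => -(Y ω)) = ⊤ by
        unfold eexp posPartInt
        rw [show (∫⁻ ω, ENNReal.ofReal ((fun ω => -(Y ω)) ω) ∂μ) = ⊤ from hYinf]
        rw [show (∫⁻ ω, ENNReal.ofReal (-(fun ω => -(Y ω)) ω) ∂μ) = 0 by
          simp_rw [neg_neg]; exact hpY]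
        simp,
      show eexp μ (fun ω => -(X ω)) = ⊥ by
        unfold eexp posPartInt
        rw [show (∫⁻ ω, ENNReal.ofReal ((fun ω => -(X ω)) ω) ∂μ) = 0 from hnX]
        rw [show (∫⁻ ω, ENNReal.ofReal (-(fun ω => -(X ω)) ω) ∂μ) = ⊤ by
          simp_rw [neg_neg]; exact hXinf]
        simp] at this
    exact absurd this (by simp)
end

section
/- For random variables X, Y ∈ L^0, if E[Y₊] = ∞, then X ≤_cx Y is equivalent to X ≤_dcx Y. -/
open MeasureTheory ProbabilityTheory

/-- Decreasing convex order: `E[u(X)] ≤ E[u(Y)]` for every decreasing convex `u` such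
that both expectations are well-defined. -/
def DcxOrd {Ω : Type*} {mΩ : MeasurableSpace Ω} (μ : Measure Ω) (X Y : Ω → ℝ) : Prop :=
  ∀ u : ℝ → ℝ, ConvexOn ℝ Set.univ u → Antitone u →
    WellDef μ (fun ω => u (X ω)) → WellDef μ (fun ω => u (Y ω)) →
    eexp μ (fun ω => u (X ω)) ≤ eexp μ (fun ω => u (Y ω))

lemma convex_line_lower_bound {u : ℝ → ℝ} (hu : ConvexOn ℝ Set.univ u)
    {a b : ℝ} (hab : a < b) {y : ℝ} (hy : b ≤ y) :
    u b + ((u b - u a) / (b - a)) * (y - b) ≤ u y := by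
  rcases eq_or_lt_of_le hy with rfl | hby
  · simp
  · have hslope := hu.slope_mono_adjacent (Set.mem_univ a) (Set.mem_univ y) hab hby
    rw [div_le_div_iff₀ (by linarith) (by linarith)] at hslope
    have hpos : (0:ℝ) < b - a := by linarith
    rw [div_mul_eq_mul_div]
    have h2 : (u b - u a) * (y - b) / (b - a) ≤ u y - u b := by
      rw [div_le_iff₀ hpos]; nlinarith
    linarith

/-- If `E[Y₊] = ∞`, then `X ≤_cx Y` is equivalent to `X ≤_dcx Y`. -/
theorem convexOrd_iff_dcxOrd
    {Ω : Type*} [MeasurableSpace Ω] (μ : Measure Ω) [IsProbabilityMeasure μ]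
    (hμ : Atomless μ) (X Y : Ω → ℝ) (hX : Measurable X) (hY : Measurable Y)
    (hYinf : posPartInt μ Y = ⊤) :
    ConvexOrd μ X Y ↔ DcxOrd μ X Y := by
  constructor
  · intro hcx u hu _ hWX hWY
    exact hcx u hu hWX hWY
  · intro hdcx u hu hWX hWY
    by_cases hanti : Antitone u
    · exact hdcx u hu hanti hWX hWY
    · -- u is not antitone: it eventually has positive slope
      unfold Antitone at hanti
      push_neg at hanti
      obtain ⟨a, b, hab, huab⟩ := hanti
      have hab' : a < b := lt_of_le_of_ne hab (by rintro rfl; exact lt_irrefl _ huab)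
      set s : ℝ := (u b - u a) / (b - a) with hs_def
      have hs : 0 < s := div_pos (by linarith) (by linarith)
      set c : ℝ := u b - s * b with hc_def
      have hline : ∀ y : ℝ, b ≤ y → s * y + c ≤ u y := by
        intro y hy
        have := convex_line_lower_bound hu hab' hy
        rw [← hs_def] at this
        nlinarith [this]
      set K : ℝ := max b ((-c) / s) with hK_def
      have hpt : ∀ y : ℝ, ENNReal.ofReal y ≤
          ENNReal.ofReal (1 / s) * ENNReal.ofReal (u y) + ENNReal.ofReal K := by
        intro y
        rcases le_or_gt y b with hyb | hby
        · calc ENNReal.ofReal y ≤ ENNReal.ofReal K :=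
                ENNReal.ofReal_le_ofReal (le_trans hyb (le_max_left _ _))
            _ ≤ _ := le_add_self
        · have hy : b ≤ y := le_of_lt hby
          have h1 : y = (1 / s) * (s * y + c) + (-c) / s := by
            field_simp
            ring
          calc ENNReal.ofReal y
              = ENNReal.ofReal ((1 / s) * (s * y + c) + (-c) / s) := by rw [← h1]
            _ ≤ ENNReal.ofReal ((1 / s) * (s * y + c)) + ENNReal.ofReal ((-c) / s) :=
                ENNReal.ofReal_add_le
            _ = ENNReal.ofReal (1 / s) * ENNReal.ofReal (s * y + c)
                  + ENNReal.ofReal ((-c) / s) := by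
                rw [ENNReal.ofReal_mul (by positivity)]
            _ ≤ ENNReal.ofReal (1 / s) * ENNReal.ofReal (u y) + ENNReal.ofReal K := by
                gcongr
                · exact hline y hy
                · exact le_max_right _ _
      have hint : posPartInt μ (fun ω => u (Y ω)) = ⊤ := by
        by_contra h
        have hle : posPartInt μ Y ≤
            ENNReal.ofReal (1 / s) * posPartInt μ (fun ω => u (Y ω))
              + ENNReal.ofReal K * μ Set.univ := by
          simp only [posPartInt]
          calc ∫⁻ ω, ENNReal.ofReal (Y ω) ∂μ
              ≤ ∫⁻ ω, (ENNReal.ofReal (1 / s) * ENNReal.ofReal (u (Y ω))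
                  + ENNReal.ofReal K) ∂μ := lintegral_mono fun ω => hpt (Y ω)
            _ = (∫⁻ ω, ENNReal.ofReal (1 / s) * ENNReal.ofReal (u (Y ω)) ∂μ)
                  + ENNReal.ofReal K * μ Set.univ := by
                rw [lintegral_add_right _ measurable_const, lintegral_const]
            _ = _ := by
                rw [lintegral_const_mul' _ _ ENNReal.ofReal_ne_top]
        rw [hYinf, top_le_iff] at hle
        exact ENNReal.add_ne_top.2
          ⟨ENNReal.mul_ne_top ENNReal.ofReal_ne_top h,
           ENNReal.mul_ne_top ENNReal.ofReal_ne_top (measure_ne_top μ _)⟩ hle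
      have hneg : posPartInt μ (fun ω => -(u (Y ω))) ≠ ⊤ := by
        rcases hWY with h | h
        · exact absurd hint h
        · exact h
      have heq : eexp μ (fun ω => u (Y ω)) = ⊤ := by
        rw [eexp, hint]
        rw [EReal.coe_ennreal_top, sub_eq_add_neg, EReal.top_add_of_ne_bot]
        rw [ne_eq, EReal.neg_eq_bot_iff]
        exact fun hcontra => hneg (by
          rwa [EReal.coe_ennreal_eq_top_iff] at hcontra)
      rw [heq]
      exact le_top
end

section
/- For random variables X, Y ∈ L^0, if E[Y₋] = ∞, then X ≤_cx Y is equivalent to X ≤_icx Y. -/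
open MeasureTheory ProbabilityTheory

/-- Increasing convex order: `E[u(X)] ≤ E[u(Y)]` for every increasing convex `u` such
that both expectations are well-defined. -/
def IcxOrd {Ω : Type*} {mΩ : MeasurableSpace Ω} (μ : Measure Ω) (X Y : Ω → ℝ) : Prop :=
  ∀ u : ℝ → ℝ, ConvexOn ℝ Set.univ u → Monotone u →
    WellDef μ (fun ω => u (X ω)) → WellDef μ (fun ω => u (Y ω)) →
    eexp μ (fun ω => u (X ω)) ≤ eexp μ (fun ω => u (Y ω))

/-- If `E[Y₋] = ∞`, then `X ≤_cx Y` is equivalent to `X ≤_icx Y`. -/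
theorem convexOrd_iff_icxOrd
    {Ω : Type*} [MeasurableSpace Ω] (μ : Measure Ω) [IsProbabilityMeasure μ]
    (hμ : Atomless μ) (X Y : Ω → ℝ) (hX : Measurable X) (hY : Measurable Y)
    (hYinf : posPartInt μ (fun ω => -Y ω) = ⊤) :
    ConvexOrd μ X Y ↔ IcxOrd μ X Y := by

  constructor
  · intro h u hu humono hwX hwY
    exact h u hu hwX hwY
  · intro h u hu hwX hwY
    by_cases hmono : Monotone u
    · exact h u hu hmono hwX hwY
    · -- u is convex but not monotone, so it grows linearly at -∞,
      -- hence E[u(Y)₊] = ∞ and eexp μ (u ∘ Y) = ⊤.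
      rw [Monotone] at hmono
      push_neg at hmono
      obtain ⟨a, b, hab, hba⟩ := hmono
      have hab' : a < b := hab.lt_of_ne (by rintro rfl; exact lt_irrefl _ hba)
      set s : ℝ := (u b - u a) / (b - a) with hs_def
      have hs : s < 0 := div_neg_of_neg_of_pos (by linarith) (by linarith)
      set c : ℝ := -s with hc_def
      have hc : 0 < c := by simp [hc_def]; linarith
      have hkey : ∀ y : ℝ, y ≤ a → u a + s * (y - a) ≤ u y := by
        intro y hy
        rcases eq_or_lt_of_le hy with rfl | hy'
        · simp
        · have hsl := hu.slope_mono_adjacent (Set.mem_univ y) (Set.mem_univ b) hy' hab'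
          have h2 : (0:ℝ) < a - y := by linarith
          rw [div_le_div_iff₀ h2 (by linarith : (0:ℝ) < b - a)] at hsl
          have hseq : s * (b - a) = u b - u a := by
            rw [hs_def, div_mul_cancel₀ _ (ne_of_gt (by linarith : (0:ℝ) < b - a))]
          nlinarith [hsl, hseq]
      set T : Set Ω := {ω | Y ω ≤ a} with hT_def
      have hT : MeasurableSet T := measurableSet_le hY measurable_const
      -- Step 1: ∫ indicator T (ofReal (a - Y)) = ⊤
      have h1 : ∀ ω, ENNReal.ofReal (-Y ω) ≤
          T.indicator (fun ω => ENNReal.ofReal (a - Y ω)) ω + ENNReal.ofReal (-a) := by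
        intro ω
        by_cases hω : ω ∈ T
        · rw [Set.indicator_of_mem hω]
          calc ENNReal.ofReal (-Y ω) = ENNReal.ofReal ((a - Y ω) + (-a)) := by ring_nf
            _ ≤ ENNReal.ofReal (a - Y ω) + ENNReal.ofReal (-a) := ENNReal.ofReal_add_le
        · rw [Set.indicator_of_notMem hω, zero_add]
          have : ¬ Y ω ≤ a := hω
          exact ENNReal.ofReal_le_ofReal (by linarith [not_le.mp this])
      have hI : ∫⁻ ω, T.indicator (fun ω => ENNReal.ofReal (a - Y ω)) ω ∂μ = ⊤ := by
        have hle : posPartInt μ (fun ω => -Y ω) ≤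
            (∫⁻ ω, T.indicator (fun ω => ENNReal.ofReal (a - Y ω)) ω ∂μ) +
              ENNReal.ofReal (-a) := by
          calc posPartInt μ (fun ω => -Y ω)
              = ∫⁻ ω, ENNReal.ofReal (-Y ω) ∂μ := rfl
            _ ≤ ∫⁻ ω, (T.indicator (fun ω => ENNReal.ofReal (a - Y ω)) ω
                + ENNReal.ofReal (-a)) ∂μ := lintegral_mono h1
            _ = (∫⁻ ω, T.indicator (fun ω => ENNReal.ofReal (a - Y ω)) ω ∂μ)
                + ENNReal.ofReal (-a) * μ Set.univ := by
                rw [lintegral_add_right _ measurable_const, lintegral_const]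
            _ = _ := by simp
        rw [hYinf, top_le_iff] at hle
        rcases ENNReal.add_eq_top.mp hle with h' | h'
        · exact h'
        · exact absurd h' ENNReal.ofReal_ne_top
      -- Step 2: ∫ indicator T (ofReal (c * (a - Y))) = ⊤
      have h3 : ∫⁻ ω, T.indicator (fun ω => ENNReal.ofReal (c * (a - Y ω))) ω ∂μ = ⊤ := by
        have heq : ∀ ω, T.indicator (fun ω => ENNReal.ofReal (c * (a - Y ω))) ω
            = ENNReal.ofReal c * T.indicator (fun ω => ENNReal.ofReal (a - Y ω)) ω := by
          intro ω
          by_cases hω : ω ∈ T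
          · rw [Set.indicator_of_mem hω, Set.indicator_of_mem hω,
              ENNReal.ofReal_mul hc.le]
          · rw [Set.indicator_of_notMem hω, Set.indicator_of_notMem hω, mul_zero]
        calc ∫⁻ ω, T.indicator (fun ω => ENNReal.ofReal (c * (a - Y ω))) ω ∂μ
            = ∫⁻ ω, ENNReal.ofReal c *
                T.indicator (fun ω => ENNReal.ofReal (a - Y ω)) ω ∂μ := by
              exact lintegral_congr heq
          _ = ENNReal.ofReal c *
                ∫⁻ ω, T.indicator (fun ω => ENNReal.ofReal (a - Y ω)) ω ∂μ :=
              lintegral_const_mul' _ _ ENNReal.ofReal_ne_top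
          _ = ⊤ := by
              rw [hI, ENNReal.mul_top]
              simpa [ENNReal.ofReal_eq_zero] using hc
      -- Step 3: posPartInt μ (u ∘ Y) = ⊤
      have h2 : ∀ ω, T.indicator (fun ω => ENNReal.ofReal (c * (a - Y ω))) ω ≤
          T.indicator (fun ω => ENNReal.ofReal (u (Y ω))) ω + ENNReal.ofReal (-(u a)) := by
        intro ω
        by_cases hω : ω ∈ T
        · rw [Set.indicator_of_mem hω, Set.indicator_of_mem hω]
          have hk := hkey (Y ω) hω
          have hcs : c * (a - Y ω) = s * (Y ω - a) := by rw [hc_def]; ring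
          calc ENNReal.ofReal (c * (a - Y ω))
              ≤ ENNReal.ofReal (u (Y ω) + (-(u a))) :=
                ENNReal.ofReal_le_ofReal (by rw [hcs]; linarith)
            _ ≤ ENNReal.ofReal (u (Y ω)) + ENNReal.ofReal (-(u a)) := ENNReal.ofReal_add_le
        · rw [Set.indicator_of_notMem hω, Set.indicator_of_notMem hω]
          exact zero_le
      have htop : posPartInt μ (fun ω => u (Y ω)) = ⊤ := by
        have hle : (⊤ : ENNReal) ≤
            (∫⁻ ω, T.indicator (fun ω => ENNReal.ofReal (u (Y ω))) ω ∂μ) +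
              ENNReal.ofReal (-(u a)) := by
          calc (⊤ : ENNReal)
              = ∫⁻ ω, T.indicator (fun ω => ENNReal.ofReal (c * (a - Y ω))) ω ∂μ := h3.symm
            _ ≤ ∫⁻ ω, (T.indicator (fun ω => ENNReal.ofReal (u (Y ω))) ω
                + ENNReal.ofReal (-(u a))) ∂μ := lintegral_mono h2
            _ = (∫⁻ ω, T.indicator (fun ω => ENNReal.ofReal (u (Y ω))) ω ∂μ)
                + ENNReal.ofReal (-(u a)) * μ Set.univ := by
                rw [lintegral_add_right _ measurable_const, lintegral_const]
            _ = _ := by simp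
        rw [top_le_iff] at hle
        have hind : ∫⁻ ω, T.indicator (fun ω => ENNReal.ofReal (u (Y ω))) ω ∂μ = ⊤ := by
          rcases ENNReal.add_eq_top.mp hle with h' | h'
          · exact h'
          · exact absurd h' ENNReal.ofReal_ne_top
        refine top_le_iff.mp ?_
        rw [← hind]
        exact lintegral_mono fun ω => Set.indicator_le_self _ _ ω
      have hneg : posPartInt μ (fun ω => -(u (Y ω))) ≠ ⊤ := by
        rcases hwY with h' | h'
        · exact absurd htop h'
        · exact h'
      have heY : eexp μ (fun ω => u (Y ω)) = ⊤ := by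
        rw [eexp, htop, EReal.coe_ennreal_top]
        rw [sub_eq_add_neg, EReal.top_add_of_ne_bot]
        rw [ne_eq, EReal.neg_eq_bot_iff, EReal.coe_ennreal_eq_top_iff]
        exact hneg
      rw [heY]
      exact le_top
end

section
/- Let X, Y, Z, W ∈ L^0 with X equal in distribution to Z and Y equal in distribution to W. If E[X+Y] and E[Z+W] are both well-defined (possibly infinite), then E[X+Y] = E[Z+W]. -/
open MeasureTheory ProbabilityTheory

section AuxEexp

open scoped ENNReal
open Filter Topology


noncomputable def myTrunc (n : ℕ) (x : ℝ) : ℝ := max (-(n:ℝ)) (min (n:ℝ) x)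

lemma myTrunc_le (n : ℕ) (x : ℝ) : myTrunc n x ≤ n :=
  max_le (neg_le_self (by positivity)) (min_le_left _ _)

lemma neg_le_myTrunc (n : ℕ) (x : ℝ) : -(n:ℝ) ≤ myTrunc n x := le_max_left _ _

lemma continuous_myTrunc (n : ℕ) : Continuous (myTrunc n) :=
  continuous_const.max (continuous_const.min continuous_id)

lemma myTrunc_eq (n : ℕ) (x : ℝ) (h : |x| ≤ n) : myTrunc n x = x := by
  rw [abs_le] at h
  rw [myTrunc, min_eq_right h.2, max_eq_right h.1]

lemma myTrunc_le_self (n : ℕ) (x : ℝ) (h : -(n:ℝ) ≤ x) : myTrunc n x ≤ x :=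
  max_le h (min_le_right _ _)

lemma self_le_myTrunc (n : ℕ) (x : ℝ) (h : x ≤ (n:ℝ)) : x ≤ myTrunc n x :=
  le_max_of_le_right (le_min h le_rfl)

lemma myTrunc_eq_neg (n : ℕ) (x : ℝ) (h : x < -(n:ℝ)) : myTrunc n x = -(n:ℝ) :=
  max_eq_left ((min_le_right _ _).trans h.le)

lemma myTrunc_eq_pos (n : ℕ) (x : ℝ) (h : (n:ℝ) < x) : myTrunc n x = (n:ℝ) := by
  rw [myTrunc, min_eq_left h.le, max_eq_right (neg_le_self (by positivity))]

lemma ofReal_trunc_add_le (n : ℕ) (x y : ℝ) :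
    ENNReal.ofReal (myTrunc n x + myTrunc n y) ≤ ENNReal.ofReal (x + y) := by
  rcases le_or_gt (-(n:ℝ)) x with hx | hx
  · rcases le_or_gt (-(n:ℝ)) y with hy | hy
    · exact ENNReal.ofReal_le_ofReal (add_le_add (myTrunc_le_self n x hx) (myTrunc_le_self n y hy))
    · rw [ENNReal.ofReal_eq_zero.mpr (by rw [myTrunc_eq_neg n y hy]; linarith [myTrunc_le n x])]
      exact zero_le
  · rw [ENNReal.ofReal_eq_zero.mpr (by rw [myTrunc_eq_neg n x hx]; linarith [myTrunc_le n y])]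
    exact zero_le

lemma ofReal_neg_trunc_add_le (n : ℕ) (x y : ℝ) :
    ENNReal.ofReal (-(myTrunc n x + myTrunc n y)) ≤ ENNReal.ofReal (-(x + y)) := by
  rcases le_or_gt x (n:ℝ) with hx | hx
  · rcases le_or_gt y (n:ℝ) with hy | hy
    · exact ENNReal.ofReal_le_ofReal
        (by linarith [self_le_myTrunc n x hx, self_le_myTrunc n y hy])
    · rw [ENNReal.ofReal_eq_zero.mpr (by rw [myTrunc_eq_pos n y hy]; linarith [neg_le_myTrunc n x])]
      exact zero_le
  · rw [ENNReal.ofReal_eq_zero.mpr (by rw [myTrunc_eq_pos n x hx]; linarith [neg_le_myTrunc n y])]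
    exact zero_le

lemma lint_tendsto {Ω : Type*} [MeasurableSpace Ω] (μ : Measure Ω)
    (g : Ω → ℝ) (gn : ℕ → Ω → ℝ)
    (hgn : ∀ n, AEMeasurable (gn n) μ)
    (hle : ∀ n ω, ENNReal.ofReal (gn n ω) ≤ ENNReal.ofReal (g ω))
    (hev : ∀ ω, ∀ᶠ n in atTop, gn n ω = g ω) :
    Tendsto (fun n => ∫⁻ ω, ENNReal.ofReal (gn n ω) ∂μ) atTop
      (𝓝 (∫⁻ ω, ENNReal.ofReal (g ω) ∂μ)) := by
  set L := ∫⁻ ω, ENNReal.ofReal (g ω) ∂μ with hL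
  have hub : ∀ n, ∫⁻ ω, ENNReal.ofReal (gn n ω) ∂μ ≤ L :=
    fun n => lintegral_mono (hle n)
  have hsup : limsup (fun n => ∫⁻ ω, ENNReal.ofReal (gn n ω) ∂μ) atTop ≤ L :=
    limsup_le_of_le (by isBoundedDefault) (Eventually.of_forall hub)
  have hinf : L ≤ liminf (fun n => ∫⁻ ω, ENNReal.ofReal (gn n ω) ∂μ) atTop := by
    have : L = ∫⁻ ω, liminf (fun n => ENNReal.ofReal (gn n ω)) atTop ∂μ := by
      refine lintegral_congr fun ω => ?_
      rw [liminf_congr ((hev ω).mono (fun n h => by rw [h])), liminf_const]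
    rw [this]
    exact lintegral_liminf_le' (fun n => ENNReal.measurable_ofReal.comp_aemeasurable (hgn n))
  have hlel := liminf_le_limsup (f := atTop)
    (u := fun n => ∫⁻ ω, ENNReal.ofReal (gn n ω) ∂μ)
  exact tendsto_of_liminf_eq_limsup (le_antisymm (hlel.trans hsup) hinf)
    (le_antisymm hsup (hinf.trans hlel))

lemma posPartInt_ne_top {Ω : Type*} [MeasurableSpace Ω] {μ : Measure Ω} {g : Ω → ℝ}
    (hg : Integrable g μ) : posPartInt μ g ≠ ⊤ := by
  have h : posPartInt μ g ≤ ∫⁻ ω, ‖g ω‖₊ ∂μ := lintegral_mono fun ω => by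
    rw [← enorm_eq_nnnorm, Real.enorm_eq_ofReal_abs]; exact ENNReal.ofReal_le_ofReal (le_abs_self _)
  exact (h.trans_lt hg.2).ne

lemma ennreal_coe_ereal_toReal {a : ℝ≥0∞} (h : a ≠ ⊤) :
    (a : EReal) = ((a.toReal : ℝ) : EReal) := by
  conv_lhs => rw [← ENNReal.ofReal_toReal h]
  rw [EReal.coe_ennreal_ofReal, max_eq_left ENNReal.toReal_nonneg]

lemma eexp_eq_integral {Ω : Type*} [MeasurableSpace Ω] {μ : Measure Ω} {g : Ω → ℝ}
    (hg : Integrable g μ) : eexp μ g = ((∫ ω, g ω ∂μ : ℝ) : EReal) := by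
  have hP := posPartInt_ne_top hg
  have hN : posPartInt μ (fun ω => -g ω) ≠ ⊤ := posPartInt_ne_top hg.neg
  rw [integral_eq_lintegral_pos_part_sub_lintegral_neg_part hg, eexp,
    ennreal_coe_ereal_toReal hP, ennreal_coe_ereal_toReal hN, ← EReal.coe_sub]
  rfl

lemma eexp_tendsto {Ω : Type*} [MeasurableSpace Ω] (μ : Measure Ω) (g : Ω → ℝ) (gn : ℕ → Ω → ℝ)
    (hP : Tendsto (fun n => posPartInt μ (gn n)) atTop (𝓝 (posPartInt μ g)))
    (hN : Tendsto (fun n => posPartInt μ (fun ω => -(gn n ω))) atTop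
      (𝓝 (posPartInt μ (fun ω => -(g ω)))))
    (hw : posPartInt μ g ≠ ⊤ ∨ posPartInt μ (fun ω => -(g ω)) ≠ ⊤) :
    Tendsto (fun n => eexp μ (gn n)) atTop (𝓝 (eexp μ g)) := by
  have hP' : Tendsto (fun n => (posPartInt μ (gn n) : EReal)) atTop
      (𝓝 (posPartInt μ g : EReal)) := EReal.tendsto_coe_ennreal.mpr hP
  have hN' : Tendsto (fun n => -(posPartInt μ (fun ω => -(gn n ω)) : EReal)) atTop
      (𝓝 (-(posPartInt μ (fun ω => -(g ω)) : EReal))) :=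
    (EReal.tendsto_coe_ennreal.mpr hN).neg
  have hc : ContinuousAt (fun p : EReal × EReal => p.1 + p.2)
      ((posPartInt μ g : EReal), -(posPartInt μ (fun ω => -(g ω)) : EReal)) := by
    apply EReal.continuousAt_add
    · rcases hw with h | h
      · exact Or.inl (by simpa [EReal.coe_ennreal_eq_top_iff] using h)
      · exact Or.inr (by simp [EReal.neg_eq_bot_iff, EReal.coe_ennreal_eq_top_iff, h])
    · exact Or.inl (EReal.coe_ennreal_ne_bot _)
  have h := hc.tendsto.comp (hP'.prodMk_nhds hN')
  simpa [eexp, sub_eq_add_neg, Function.comp_def] using h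

end AuxEexp

/-- If `X =d Z`, `Y =d W`, and `E[X+Y]` and `E[Z+W]` are both well-defined (possibly
infinite), then `E[X+Y] = E[Z+W]`. -/
theorem eexp_add_eq_of_identDistrib
    {Ω : Type*} [MeasurableSpace Ω] (μ : Measure Ω) [IsProbabilityMeasure μ]
    (hμ : Atomless μ) (X Y Z W : Ω → ℝ)
    (hXZ : IdentDistrib X Z μ μ) (hYW : IdentDistrib Y W μ μ)
    (hXY : WellDef μ (fun ω => X ω + Y ω)) (hZW : WellDef μ (fun ω => Z ω + W ω)) :
    eexp μ (fun ω => X ω + Y ω) = eexp μ (fun ω => Z ω + W ω) := by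
  have hX : AEMeasurable X μ := hXZ.aemeasurable_fst
  have hY : AEMeasurable Y μ := hYW.aemeasurable_fst
  have hZ : AEMeasurable Z μ := hXZ.aemeasurable_snd
  have hW : AEMeasurable W μ := hYW.aemeasurable_snd
  set S : ℕ → Ω → ℝ := fun n ω => myTrunc n (X ω) + myTrunc n (Y ω) with hS
  set T : ℕ → Ω → ℝ := fun n ω => myTrunc n (Z ω) + myTrunc n (W ω) with hT
  have hint : ∀ (V : Ω → ℝ), AEMeasurable V μ → ∀ n : ℕ,
      Integrable (fun ω => myTrunc n (V ω)) μ := by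
    intro V hV n
    refine Integrable.mono' (integrable_const (n:ℝ))
      ((continuous_myTrunc n).measurable.comp_aemeasurable hV).aestronglyMeasurable
      (Filter.Eventually.of_forall fun ω => ?_)
    rw [Real.norm_eq_abs, abs_le]
    exact ⟨neg_le_myTrunc n _, myTrunc_le n _⟩
  have heq : ∀ n, eexp μ (S n) = eexp μ (T n) := by
    intro n
    rw [show eexp μ (S n) = ((∫ ω, S n ω ∂μ : ℝ) : EReal) from
          eexp_eq_integral ((hint X hX n).add (hint Y hY n)),
        show eexp μ (T n) = ((∫ ω, T n ω ∂μ : ℝ) : EReal) from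
          eexp_eq_integral ((hint Z hZ n).add (hint W hW n))]
    rw [hS, hT]
    have e1 : ∫ ω, myTrunc n (X ω) ∂μ = ∫ ω, myTrunc n (Z ω) ∂μ :=
      (hXZ.comp (continuous_myTrunc n).measurable).integral_eq
    have e2 : ∫ ω, myTrunc n (Y ω) ∂μ = ∫ ω, myTrunc n (W ω) ∂μ :=
      (hYW.comp (continuous_myTrunc n).measurable).integral_eq
    rw [integral_add (hint X hX n) (hint Y hY n), integral_add (hint Z hZ n) (hint W hW n),
        e1, e2]
  have hcast : ∀ (v w : ℝ) (n : ℕ), ⌈|v|⌉₊ ⊔ ⌈|w|⌉₊ ≤ n → |v| ≤ (n:ℝ) := by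
    intro v w n hn
    exact (Nat.le_ceil _).trans (Nat.cast_le.mpr ((le_max_left _ _).trans hn))
  have hevS : ∀ ω, ∀ᶠ n in Filter.atTop, S n ω = X ω + Y ω := by
    intro ω
    filter_upwards [Filter.eventually_ge_atTop (⌈|X ω|⌉₊ ⊔ ⌈|Y ω|⌉₊)] with n hn
    rw [hS]
    simp only
    rw [myTrunc_eq n _ (hcast _ (Y ω) n hn), myTrunc_eq n _ (hcast (Y ω) (X ω) n (by rwa [sup_comm]))]
  have hevT : ∀ ω, ∀ᶠ n in Filter.atTop, T n ω = Z ω + W ω := by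
    intro ω
    filter_upwards [Filter.eventually_ge_atTop (⌈|Z ω|⌉₊ ⊔ ⌈|W ω|⌉₊)] with n hn
    rw [hT]
    simp only
    rw [myTrunc_eq n _ (hcast _ (W ω) n hn), myTrunc_eq n _ (hcast (W ω) (Z ω) n (by rwa [sup_comm]))]
  have hmeasS : ∀ n : ℕ, AEMeasurable (S n) μ := fun n =>
    ((continuous_myTrunc n).measurable.comp_aemeasurable hX).add
      ((continuous_myTrunc n).measurable.comp_aemeasurable hY)
  have hmeasT : ∀ n : ℕ, AEMeasurable (T n) μ := fun n =>
    ((continuous_myTrunc n).measurable.comp_aemeasurable hZ).add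
      ((continuous_myTrunc n).measurable.comp_aemeasurable hW)
  have hPS : Filter.Tendsto (fun n => posPartInt μ (S n)) Filter.atTop
      (nhds (posPartInt μ (fun ω => X ω + Y ω))) :=
    lint_tendsto μ _ _ hmeasS (fun n ω => ofReal_trunc_add_le n _ _) hevS
  have hNS : Filter.Tendsto (fun n => posPartInt μ (fun ω => -(S n ω))) Filter.atTop
      (nhds (posPartInt μ (fun ω => -(X ω + Y ω)))) :=
    lint_tendsto μ (fun ω => -(X ω + Y ω)) (fun n ω => -(S n ω)) (fun n => (hmeasS n).neg)
      (fun n ω => ofReal_neg_trunc_add_le n _ _)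
      (fun ω => (hevS ω).mono fun n h => by show -S n ω = -(X ω + Y ω); rw [h])
  have hPT : Filter.Tendsto (fun n => posPartInt μ (T n)) Filter.atTop
      (nhds (posPartInt μ (fun ω => Z ω + W ω))) :=
    lint_tendsto μ _ _ hmeasT (fun n ω => ofReal_trunc_add_le n _ _) hevT
  have hNT : Filter.Tendsto (fun n => posPartInt μ (fun ω => -(T n ω))) Filter.atTop
      (nhds (posPartInt μ (fun ω => -(Z ω + W ω)))) :=
    lint_tendsto μ (fun ω => -(Z ω + W ω)) (fun n ω => -(T n ω)) (fun n => (hmeasT n).neg)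
      (fun n ω => ofReal_neg_trunc_add_le n _ _)
      (fun ω => (hevT ω).mono fun n h => by show -T n ω = -(Z ω + W ω); rw [h])
  have h1 : Filter.Tendsto (fun n => eexp μ (S n)) Filter.atTop
      (nhds (eexp μ (fun ω => X ω + Y ω))) := eexp_tendsto μ _ _ hPS hNS hXY
  have h2 : Filter.Tendsto (fun n => eexp μ (T n)) Filter.atTop
      (nhds (eexp μ (fun ω => Z ω + W ω))) := eexp_tendsto μ _ _ hPT hNT hZW
  exact tendsto_nhds_unique (h1.congr heq) h2
end

section
/- For any random variables X, Y ∈ L^0, (X^ct, Y^ct) ≤_sm⋄ (X, Y) ≤_sm⋄ (X^co, Y^co), where (X^co, Y^co) is a comonotonic version of (X, Y) and (X^ct, Y^ct) is a counter-monotonic version of (X, Y). -/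
open MeasureTheory ProbabilityTheory

/-- A function `φ : ℝ^d → ℝ` is supermodular if
`φ x + φ y ≤ φ (x ⊓ y) + φ (x ⊔ y)` for all `x, y`. -/
def Supermodular {d : ℕ} (φ : (Fin d → ℝ) → ℝ) : Prop :=
  ∀ x y : Fin d → ℝ, φ x + φ y ≤ φ (x ⊓ y) + φ (x ⊔ y)

/-- The ⋄supermodular order: `E[φ(X)] ≤ E[φ(Y)]` for every bounded, right-continuous
supermodular `φ : ℝ^d → ℝ`. -/
def SmDiamondOrd {Ω : Type*} {mΩ : MeasurableSpace Ω} (μ : Measure Ω) {d : ℕ}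
    (X Y : Fin d → Ω → ℝ) : Prop :=
  ∀ φ : (Fin d → ℝ) → ℝ, Supermodular φ → (∃ C, ∀ x, |φ x| ≤ C) →
    (∀ x : Fin d → ℝ, ContinuousWithinAt φ (Set.Ici x) x) →
    eexp μ (fun ω => φ (fun i => X i ω)) ≤ eexp μ (fun ω => φ (fun i => Y i ω))


open Filter Set

section Aux
variable {Ω : Type*} {mΩ : MeasurableSpace Ω} {μ : Measure Ω}

lemma posPartInt_ne_top_s15 [IsFiniteMeasure μ] {Z : Ω → ℝ} {C : ℝ} (hC : ∀ ω, |Z ω| ≤ C) :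
    posPartInt μ Z ≠ ⊤ := by
  have h : posPartInt μ Z ≤ ENNReal.ofReal C * μ Set.univ := by
    rw [← lintegral_const]
    exact lintegral_mono fun ω => ENNReal.ofReal_le_ofReal ((le_abs_self _).trans (hC ω))
  exact ne_top_of_le_ne_top (by finiteness) h

lemma eexp_eq_integral_s15 [IsFiniteMeasure μ] {Z : Ω → ℝ} (hZ : AEStronglyMeasurable Z μ)
    {C : ℝ} (hC : ∀ ω, |Z ω| ≤ C) :
    eexp μ Z = ((∫ ω, Z ω ∂μ : ℝ) : EReal) := by
  have hint : Integrable Z μ :=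
    ⟨hZ, HasFiniteIntegral.of_bounded (ae_of_all _ fun ω => by
      simpa [Real.norm_eq_abs] using hC ω)⟩
  have hp : posPartInt μ Z ≠ ⊤ := posPartInt_ne_top_s15 hC
  have hq : posPartInt μ (fun ω => -Z ω) ≠ ⊤ :=
    posPartInt_ne_top_s15 (C := C) (fun ω => by simpa [abs_neg] using hC ω)
  rw [integral_eq_lintegral_pos_part_sub_lintegral_neg_part hint]
  unfold eexp posPartInt at *
  lift (∫⁻ ω, ENNReal.ofReal (Z ω) ∂μ) to NNReal using hp with p hp'
  lift (∫⁻ ω, ENNReal.ofReal (-Z ω) ∂μ) to NNReal using hq with q hq'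
  rw [EReal.coe_sub]
  norm_cast

end Aux

section Aux2
variable {Ω : Type*} {mΩ : MeasurableSpace Ω} {μ : MeasureTheory.Measure Ω}



lemma measurable_comp_finRange {α β : Type*} [MeasurableSpace β] {W : Ω → α}
    (S : Finset α) (hS : ∀ ω, W ω ∈ S) (hm : ∀ a ∈ S, MeasurableSet (W ⁻¹' {a}))
    (h : α → β) : Measurable fun ω => h (W ω) := by
  intro s _
  have : (fun ω => h (W ω)) ⁻¹' s = ⋃ a ∈ S, ⋃ (_ : h a ∈ s), W ⁻¹' {a} := by
    ext ω
    simp only [Set.mem_preimage, Set.mem_iUnion, Set.mem_singleton_iff]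
    constructor
    · intro hω; exact ⟨W ω, hS ω, hω, rfl⟩
    · rintro ⟨a, _, ha, rfl⟩; exact ha
  rw [this]
  exact S.measurableSet_biUnion fun a ha =>
    MeasurableSet.iUnion fun _ => hm a ha

lemma integral_comp_finRange {α : Type*} [IsFiniteMeasure μ] {W : Ω → α}
    (S : Finset α) (hS : ∀ ω, W ω ∈ S) (hm : ∀ a ∈ S, MeasurableSet (W ⁻¹' {a}))
    (h : α → ℝ) :
    ∫ ω, h (W ω) ∂μ = ∑ a ∈ S, (μ (W ⁻¹' {a})).toReal * h a := by
  classical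
  have hpt : ∀ ω, h (W ω) = ∑ a ∈ S, (W ⁻¹' {a}).indicator (fun _ => h a) ω := by
    intro ω
    rw [Finset.sum_eq_single (W ω)]
    · simp [Set.indicator_of_mem, Set.mem_preimage]
    · intro b _ hb
      simp only [Set.indicator_apply, Set.mem_preimage, Set.mem_singleton_iff]
      rw [if_neg]; intro hWb; exact hb (hWb ▸ rfl)
    · intro hW; exact absurd (hS ω) hW
  calc ∫ ω, h (W ω) ∂μ = ∫ ω, ∑ a ∈ S, (W ⁻¹' {a}).indicator (fun _ => h a) ω ∂μ := by
        simp_rw [← hpt]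
    _ = ∑ a ∈ S, ∫ ω, (W ⁻¹' {a}).indicator (fun _ => h a) ω ∂μ := by
        apply integral_finset_sum
        intro a ha
        exact (integrable_indicator_iff (hm a ha)).2 (integrableOn_const (measure_ne_top _ _))
    _ = ∑ a ∈ S, (μ (W ⁻¹' {a})).toReal * h a := by
        refine Finset.sum_congr rfl fun a ha => ?_
        rw [integral_indicator_const _ (hm a ha), smul_eq_mul, measureReal_def]

end Aux2



lemma pair_inf (a b c d : ℝ) : (![a, b] ⊓ ![c, d] : Fin 2 → ℝ) = ![min a c, min b d] := by
  funext i
  fin_cases i <;> simp [Pi.inf_apply]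

lemma pair_sup (a b c d : ℝ) : (![a, b] ⊔ ![c, d] : Fin 2 → ℝ) = ![max a c, max b d] := by
  funext i
  fin_cases i <;> simp [Pi.sup_apply]

lemma delta_nonneg {φ : (Fin 2 → ℝ) → ℝ} (hφ : Supermodular φ) {a b c d : ℝ}
    (hac : a ≤ c) (hbd : b ≤ d) :
    φ ![c, b] + φ ![a, d] ≤ φ ![a, b] + φ ![c, d] := by
  have := hφ ![c, b] ![a, d]
  rwa [pair_inf, pair_sup, min_comm, min_eq_left hac, min_eq_left hbd,
    max_comm, max_eq_right hac, max_eq_right hbd] at this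

lemma sum_range_ite (f : ℕ → ℝ) (m n : ℕ) (h : m ≤ n) :
    ∑ x ∈ Finset.range n, (if x < m then f x else 0) = ∑ x ∈ Finset.range m, f x := by
  rw [← Finset.sum_filter]
  congr 1
  ext x
  simp only [Finset.mem_filter, Finset.mem_range]
  omega

lemma sum_delta (g : ℕ → ℕ → ℝ) (K i j : ℕ) (hi : i < K) (hj : j < K) :
    ∑ a ∈ Finset.range (K - 1), ∑ b ∈ Finset.range (K - 1),
      (if a < i ∧ b < j then g (a + 1) (b + 1) - g (a + 1) b - g a (b + 1) + g a b else 0)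
    = g i j - g i 0 - g 0 j + g 0 0 := by
  have hi' : i ≤ K - 1 := by omega
  have hj' : j ≤ K - 1 := by omega
  calc ∑ a ∈ Finset.range (K - 1), ∑ b ∈ Finset.range (K - 1),
      (if a < i ∧ b < j then g (a + 1) (b + 1) - g (a + 1) b - g a (b + 1) + g a b else 0)
      = ∑ a ∈ Finset.range (K - 1), (if a < i then ∑ b ∈ Finset.range (K - 1),
          (if b < j then g (a + 1) (b + 1) - g (a + 1) b - g a (b + 1) + g a b else 0) else 0) := by
        refine Finset.sum_congr rfl fun a _ => ?_
        by_cases ha : a < i <;> simp [ha]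
    _ = ∑ a ∈ Finset.range i, ∑ b ∈ Finset.range j,
          (g (a + 1) (b + 1) - g (a + 1) b - g a (b + 1) + g a b) := by
        rw [sum_range_ite _ _ _ hi']
        exact Finset.sum_congr rfl fun a _ => sum_range_ite _ _ _ hj'
    _ = ∑ a ∈ Finset.range i, ((g (a + 1) j - g a j) - (g (a + 1) 0 - g a 0)) := by
        refine Finset.sum_congr rfl fun a _ => ?_
        have := Finset.sum_range_sub (fun b => g (a + 1) b - g a b) j
        calc ∑ b ∈ Finset.range j, (g (a + 1) (b + 1) - g (a + 1) b - g a (b + 1) + g a b)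
            = ∑ b ∈ Finset.range j, ((g (a + 1) (b + 1) - g a (b + 1)) - (g (a + 1) b - g a b)) := by
              refine Finset.sum_congr rfl fun b _ => by ring
          _ = (g (a + 1) j - g a j) - (g (a + 1) 0 - g a 0) := by rw [this]
    _ = g i j - g i 0 - g 0 j + g 0 0 := by
        have := Finset.sum_range_sub (fun a => g a j - g a 0) i
        calc ∑ a ∈ Finset.range i, ((g (a + 1) j - g a j) - (g (a + 1) 0 - g a 0))
            = ∑ a ∈ Finset.range i, ((g (a + 1) j - g (a + 1) 0) - (g a j - g a 0)) := by
              refine Finset.sum_congr rfl fun a _ => by ring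
          _ = (g i j - g i 0) - (g 0 j - g 0 0) := by rw [this]
          _ = g i j - g i 0 - g 0 j + g 0 0 := by ring


noncomputable def gdisc (n : ℕ) (x : ℝ) : ℝ :=
  ((max (-(n : ℤ) * 2 ^ n) (min (((n : ℤ) + 1) * 2 ^ n) ⌈x * 2 ^ n⌉) : ℤ) : ℝ) / 2 ^ n

lemma two_pow_pos (n : ℕ) : (0 : ℝ) < 2 ^ n := by positivity

lemma gdisc_mono (n : ℕ) : Monotone (gdisc n) := by
  intro x y hxy
  unfold gdisc
  have h2 : (0 : ℝ) < 2 ^ n := two_pow_pos n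
  gcongr

/-- grid values -/
noncomputable def vg (n : ℕ) (i : ℕ) : ℝ := -(n : ℝ) + i / 2 ^ n

def Kg (n : ℕ) : ℕ := (2 * n + 1) * 2 ^ n + 1

lemma vg_strictMono (n : ℕ) : StrictMono (vg n) := by
  intro i j hij
  unfold vg
  have := two_pow_pos n
  gcongr

lemma gdisc_mem_grid (n : ℕ) (x : ℝ) : ∃ i < Kg n, gdisc n x = vg n i := by
  set m : ℤ := max (-(n : ℤ) * 2 ^ n) (min (((n : ℤ) + 1) * 2 ^ n) ⌈x * 2 ^ n⌉) with hm
  have hpow : (0 : ℤ) < 2 ^ n := pow_pos (by norm_num) n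
  have h1 : -(n : ℤ) * 2 ^ n ≤ m := le_max_left _ _
  have h2 : m ≤ ((n : ℤ) + 1) * 2 ^ n := max_le (by nlinarith) (min_le_left _ _)
  have hnn : 0 ≤ m + (n : ℤ) * 2 ^ n := by nlinarith
  refine ⟨(m + (n : ℤ) * 2 ^ n).toNat, ?_, ?_⟩
  · rw [Int.toNat_lt hnn]
    unfold Kg
    push_cast
    nlinarith
  · unfold gdisc vg
    rw [← hm]
    have hc : ((m + (n : ℤ) * 2 ^ n).toNat : ℝ) = (m : ℝ) + (n : ℝ) * 2 ^ n := by
      have h3 : ((m + (n : ℤ) * 2 ^ n).toNat : ℤ) = m + (n : ℤ) * 2 ^ n := Int.toNat_of_nonneg hnn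
      have h4 := congrArg (Int.cast : ℤ → ℝ) h3
      push_cast at h4 ⊢
      linarith
    rw [hc]
    field_simp
    ring

lemma gdisc_bounds (n : ℕ) (x : ℝ) (hx : |x| ≤ n) :
    x ≤ gdisc n x ∧ gdisc n x ≤ x + (2 ^ n)⁻¹ := by
  have hp : (0 : ℝ) < 2 ^ n := two_pow_pos n
  rw [abs_le] at hx
  have hceil1 : x * 2 ^ n ≤ (⌈x * 2 ^ n⌉ : ℝ) := Int.le_ceil _
  have hceil2 : (⌈x * 2 ^ n⌉ : ℝ) ≤ x * 2 ^ n + 1 := le_of_lt (Int.ceil_lt_add_one _)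
  have hlow : -(n : ℤ) * 2 ^ n ≤ ⌈x * 2 ^ n⌉ := by
    have : (↑(-(n : ℤ) * 2 ^ n) : ℝ) ≤ x * 2 ^ n := by push_cast; nlinarith [hx.1]
    exact_mod_cast this.trans hceil1
  have hhigh : ⌈x * 2 ^ n⌉ ≤ ((n : ℤ) + 1) * 2 ^ n := by
    have h1 : (⌈x * 2 ^ n⌉ : ℝ) ≤ ((((n : ℤ) + 1) * 2 ^ n : ℤ) : ℝ) := by
      push_cast
      have : (1:ℝ) ≤ 2 ^ n := one_le_pow₀ (by norm_num)
      nlinarith [hx.2]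
    exact_mod_cast h1
  have heq : gdisc n x = (⌈x * 2 ^ n⌉ : ℝ) / 2 ^ n := by
    unfold gdisc
    rw [min_eq_right hhigh, max_eq_right hlow]
  rw [heq]
  constructor
  · rw [le_div_iff₀ hp]; linarith
  · rw [div_le_iff₀ hp]
    have : (x + (2 ^ n)⁻¹) * 2 ^ n = x * 2 ^ n + 1 := by field_simp
    linarith [this ▸ hceil2]

lemma gdisc_upset (n : ℕ) (s : ℝ) :
    {x : ℝ | s < gdisc n x} = ∅ ∨ {x : ℝ | s < gdisc n x} = univ ∨
      ∃ a : ℝ, {x : ℝ | s < gdisc n x} = Ioi a := by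
  have hp : (0 : ℝ) < 2 ^ n := two_pow_pos n
  set A : ℤ := -(n : ℤ) * 2 ^ n with hA
  set B : ℤ := ((n : ℤ) + 1) * 2 ^ n with hB
  by_cases hAs : s * 2 ^ n < (A : ℝ)
  · right; left
    ext x
    simp only [mem_setOf_eq, mem_univ, iff_true]
    unfold gdisc
    rw [lt_div_iff₀ hp]
    calc s * 2 ^ n < (A : ℝ) := hAs
      _ ≤ _ := Int.cast_le.2 (le_max_left _ _)
  · by_cases hBs : (B : ℝ) ≤ s * 2 ^ n
    · left
      ext x
      simp only [mem_setOf_eq, mem_empty_iff_false, iff_false, not_lt]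
      unfold gdisc
      rw [div_le_iff₀ hp]
      refine le_trans ?_ hBs
      have hAB : A ≤ B := by
        have : (0:ℤ) < 2 ^ n := pow_pos (by norm_num) n
        nlinarith
      exact Int.cast_le.2 (max_le hAB (min_le_left _ _))
    · right; right
      push_neg at hAs
      push_neg at hBs
      set F : ℤ := ⌊s * 2 ^ n⌋ with hF
      refine ⟨(F : ℝ) / 2 ^ n, ?_⟩
      have hAF : A ≤ F := Int.le_floor.2 hAs
      have hFB : F < B := Int.floor_lt.2 hBs
      ext x
      simp only [mem_setOf_eq, mem_Ioi]
      unfold gdisc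
      rw [lt_div_iff₀ hp, div_lt_iff₀ hp]
      constructor
      · intro h
        -- s * 2^n < clamp, clamp integer, so F < clamp, so F < ceil, so F < x*2^n
        have h1 : F < max A (min B ⌈x * 2 ^ n⌉) := Int.floor_lt.2 h
        have h2 : F < ⌈x * 2 ^ n⌉ := by
          rcases lt_max_iff.1 h1 with h' | h'
          · omega
          · exact lt_of_lt_of_le h' (min_le_right _ _)
        exact Int.lt_ceil.1 h2
      · intro h
        have h2 : F < ⌈x * 2 ^ n⌉ := Int.lt_ceil.2 h
        have h1 : F < max A (min B ⌈x * 2 ^ n⌉) := lt_max_iff.2 (Or.inr (lt_min hFB h2))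
        calc s * 2 ^ n < ((F + 1 : ℤ) : ℝ) := by
              push_cast
              linarith [Int.lt_floor_add_one (s * 2 ^ n)]
          _ ≤ _ := Int.cast_le.2 (Int.lt_iff_add_one_le.1 h1)

section Aux6
variable {Ω : Type*} {mΩ : MeasurableSpace Ω} {μ : Measure Ω}

lemma comonotone_survival [IsProbabilityMeasure μ] {X Y X' Y' : Ω → ℝ}
    (hco : Comonotone μ X' Y')
    (hIX : IdentDistrib X' X μ μ) (hIY : IdentDistrib Y' Y μ μ) (s t : ℝ) :
    μ ({ω | s < X ω} ∩ {ω | t < Y ω}) ≤ μ ({ω | s < X' ω} ∩ {ω | t < Y' ω}) := by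
  obtain ⟨Z, f, g, hZ, hf, hg, hXe, hYe⟩ := hco
  set A : Set ℝ := f ⁻¹' (Ioi s) with hA
  set B : Set ℝ := g ⁻¹' (Ioi t) with hB
  have hrw : μ ({ω | s < X' ω} ∩ {ω | t < Y' ω}) = μ (Z ⁻¹' A ∩ Z ⁻¹' B) := by
    apply measure_congr
    rw [Filter.eventuallyEq_set]
    filter_upwards [hXe, hYe] with ω h1 h2
    simp [h1, h2, hA, hB, Set.mem_preimage, Set.mem_Ioi]
  have hμA : μ (Z ⁻¹' A) = μ {ω | s < X ω} := by
    have h1 : Z ⁻¹' A =ᵐ[μ] X' ⁻¹' (Ioi s) := by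
      rw [Filter.eventuallyEq_set]
      filter_upwards [hXe] with ω h
      simp [hA, Set.mem_preimage, Set.mem_Ioi, h]
    rw [measure_congr h1, hIX.measure_mem_eq measurableSet_Ioi]
    rfl
  have hμB : μ (Z ⁻¹' B) = μ {ω | t < Y ω} := by
    have h1 : Z ⁻¹' B =ᵐ[μ] Y' ⁻¹' (Ioi t) := by
      rw [Filter.eventuallyEq_set]
      filter_upwards [hYe] with ω h
      simp [hB, Set.mem_preimage, Set.mem_Ioi, h]
    rw [measure_congr h1, hIY.measure_mem_eq measurableSet_Ioi]
    rfl
  rw [hrw]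
  have hnested : A ⊆ B ∨ B ⊆ A := by
    by_cases h : A ⊆ B
    · exact Or.inl h
    · right
      rw [Set.not_subset] at h
      obtain ⟨a, haA, haB⟩ := h
      intro b hb
      rcases le_total a b with hab | hab
      · exact lt_of_lt_of_le haA (hf hab)
      · exact absurd (lt_of_lt_of_le hb (hg hab)) haB
  rcases hnested with h | h
  · rw [Set.inter_eq_left.2 (Set.preimage_mono h), hμA]
    exact measure_mono Set.inter_subset_left
  · rw [Set.inter_eq_right.2 (Set.preimage_mono h), hμB]
    exact measure_mono Set.inter_subset_right

lemma countermonotone_survival [IsProbabilityMeasure μ] {X Y X' Y' : Ω → ℝ}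
    (hY : Measurable Y)
    (hct : CounterMonotone μ X' Y')
    (hIX : IdentDistrib X' X μ μ) (hIY : IdentDistrib Y' Y μ μ) (s t : ℝ) :
    μ ({ω | s < X' ω} ∩ {ω | t < Y' ω}) ≤ μ ({ω | s < X ω} ∩ {ω | t < Y ω}) := by
  obtain ⟨Z, f, g, hZ, hf, hg, hXe, hYe⟩ := hct
  set A : Set ℝ := f ⁻¹' (Ioi s) with hA
  set B : Set ℝ := g ⁻¹' (Iio (-t)) with hB
  have hrw : μ ({ω | s < X' ω} ∩ {ω | t < Y' ω}) = μ (Z ⁻¹' A ∩ Z ⁻¹' B) := by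
    apply measure_congr
    rw [Filter.eventuallyEq_set]
    filter_upwards [hXe, hYe] with ω h1 h2
    have h2' : Y' ω = -g (Z ω) := by
      have h3 : -Y' ω = g (Z ω) := h2
      linarith
    simp only [Set.mem_inter_iff, Set.mem_setOf_eq, Set.mem_preimage, Set.mem_Ioi, Set.mem_Iio,
      hA, hB, h1, h2']
    constructor
    · rintro ⟨u1, u2⟩; exact ⟨u1, by linarith⟩
    · rintro ⟨u1, u2⟩; exact ⟨u1, by linarith⟩
  have hμA : μ (Z ⁻¹' A) = μ {ω | s < X ω} := by
    have h1 : Z ⁻¹' A =ᵐ[μ] X' ⁻¹' (Ioi s) := by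
      rw [Filter.eventuallyEq_set]
      filter_upwards [hXe] with ω h
      simp [hA, Set.mem_preimage, Set.mem_Ioi, h]
    rw [measure_congr h1, hIX.measure_mem_eq measurableSet_Ioi]
    rfl
  have hμB : μ (Z ⁻¹' B) = μ {ω | t < Y ω} := by
    have h1 : Z ⁻¹' B =ᵐ[μ] Y' ⁻¹' (Ioi t) := by
      rw [Filter.eventuallyEq_set]
      filter_upwards [hYe] with ω h
      have h2' : Y' ω = -g (Z ω) := by
        have h3 : -Y' ω = g (Z ω) := h
        linarith
      simp only [Set.mem_preimage, Set.mem_Iio, Set.mem_Ioi, hB, h2']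
      constructor <;> intro <;> linarith
    rw [measure_congr h1, hIY.measure_mem_eq measurableSet_Ioi]
    rfl
  rw [hrw]
  by_cases hAB : A ∩ B = ∅
  · have : Z ⁻¹' A ∩ Z ⁻¹' B = ∅ := by
      rw [← Set.preimage_inter, hAB, Set.preimage_empty]
    simp [this]
  · obtain ⟨z₀, hz₀⟩ := Set.nonempty_iff_ne_empty.2 hAB
    have hun : Z ⁻¹' A ∪ Z ⁻¹' B = Set.univ := by
      rw [← Set.preimage_union]
      have : A ∪ B = Set.univ := by
        apply Set.eq_univ_of_forall
        intro w
        rcases le_total w z₀ with hw | hw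
        · exact Or.inr (lt_of_le_of_lt (hg hw) hz₀.2)
        · exact Or.inl (lt_of_lt_of_le hz₀.1 (hf hw))
      rw [this, Set.preimage_univ]
    have hmB : MeasurableSet (Z ⁻¹' B) := hZ ((hg.measurable) measurableSet_Iio)
    have key1 : μ (Z ⁻¹' A ∩ Z ⁻¹' B) + 1 = μ {ω | s < X ω} + μ {ω | t < Y ω} := by
      have := measure_union_add_inter (μ := μ) (Z ⁻¹' A) hmB
      rw [hun, measure_univ] at this
      rw [← hμA, ← hμB, ← this, add_comm]
    have hmYt : MeasurableSet {ω | t < Y ω} := measurableSet_lt measurable_const hY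
    have key2 : μ {ω | s < X ω} + μ {ω | t < Y ω} ≤ 1 + μ ({ω | s < X ω} ∩ {ω | t < Y ω}) := by
      have := measure_union_add_inter (μ := μ) {ω | s < X ω} hmYt
      rw [← this]
      gcongr
      exact prob_le_one
    have : μ (Z ⁻¹' A ∩ Z ⁻¹' B) + 1 ≤ μ ({ω | s < X ω} ∩ {ω | t < Y ω}) + 1 := by
      rw [key1]
      calc μ {ω | s < X ω} + μ {ω | t < Y ω} ≤ 1 + μ ({ω | s < X ω} ∩ {ω | t < Y ω}) := key2
        _ = μ ({ω | s < X ω} ∩ {ω | t < Y ω}) + 1 := add_comm _ _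
    exact (ENNReal.add_le_add_iff_right ENNReal.one_ne_top).1 this

end Aux6

lemma core_discrete {Ω : Type*} {mΩ : MeasurableSpace Ω} {μ : Measure Ω}
    [IsProbabilityMeasure μ] {φ : (Fin 2 → ℝ) → ℝ} (hsm : Supermodular φ)
    {C : ℝ} (hC : ∀ x, |φ x| ≤ C)
    {v : ℕ → ℝ} (hv : StrictMono v) {K : ℕ}
    {X Y X' Y' : Ω → ℝ} (hX : Measurable X) (hY : Measurable Y)
    (hX' : Measurable X') (hY' : Measurable Y')
    (hXv : ∀ ω, ∃ i < K, X ω = v i) (hYv : ∀ ω, ∃ i < K, Y ω = v i)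
    (hX'v : ∀ ω, ∃ i < K, X' ω = v i) (hY'v : ∀ ω, ∃ i < K, Y' ω = v i)
    (hmX : ∀ c : ℝ, μ (X ⁻¹' {c}) = μ (X' ⁻¹' {c}))
    (hmY : ∀ c : ℝ, μ (Y ⁻¹' {c}) = μ (Y' ⁻¹' {c}))
    (hsurv : ∀ s t : ℝ, μ ({ω | s < X ω} ∩ {ω | t < Y ω}) ≤ μ ({ω | s < X' ω} ∩ {ω | t < Y' ω})) :
    ∫ ω, φ ![X ω, Y ω] ∂μ ≤ ∫ ω, φ ![X' ω, Y' ω] ∂μ := by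
  classical
  set Δ : ℕ → ℕ → ℝ := fun a b =>
    φ ![v (a+1), v (b+1)] - φ ![v (a+1), v b] - φ ![v a, v (b+1)] + φ ![v a, v b] with hΔ
  have hΔ0 : ∀ a b, 0 ≤ Δ a b := by
    intro a b
    have := delta_nonneg hsm (le_of_lt (hv (Nat.lt_succ_self a)))
      (le_of_lt (hv (Nat.lt_succ_self b)))
    simp only [hΔ]
    linarith
  -- the common grid Finset
  set S : Finset ℝ := (Finset.range K).image v with hS
  have hSX : ∀ ω, X ω ∈ S := fun ω => by
    obtain ⟨i, hi, h⟩ := hXv ω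
    exact Finset.mem_image.2 ⟨i, Finset.mem_range.2 hi, h.symm⟩
  have hSY : ∀ ω, Y ω ∈ S := fun ω => by
    obtain ⟨i, hi, h⟩ := hYv ω
    exact Finset.mem_image.2 ⟨i, Finset.mem_range.2 hi, h.symm⟩
  have hSX' : ∀ ω, X' ω ∈ S := fun ω => by
    obtain ⟨i, hi, h⟩ := hX'v ω
    exact Finset.mem_image.2 ⟨i, Finset.mem_range.2 hi, h.symm⟩
  have hSY' : ∀ ω, Y' ω ∈ S := fun ω => by
    obtain ⟨i, hi, h⟩ := hY'v ω
    exact Finset.mem_image.2 ⟨i, Finset.mem_range.2 hi, h.symm⟩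
  -- decomposition, for any pair (U,V) of grid-valued rvs
  have main : ∀ (U V : Ω → ℝ), Measurable U → Measurable V →
      (∀ ω, ∃ i < K, U ω = v i) → (∀ ω, ∃ i < K, V ω = v i) →
      ∫ ω, φ ![U ω, V ω] ∂μ =
        (∫ ω, φ ![v 0, V ω] ∂μ) + (∫ ω, φ ![U ω, v 0] ∂μ) - φ ![v 0, v 0]
        + ∑ a ∈ Finset.range (K-1), ∑ b ∈ Finset.range (K-1),
            Δ a b * (μ ({ω | v a < U ω} ∩ {ω | v b < V ω})).toReal := by
    intro U V hU hV hUv hVv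
    have key : ∀ ω, φ ![U ω, V ω] =
        φ ![v 0, V ω] + φ ![U ω, v 0] - φ ![v 0, v 0]
        + ∑ a ∈ Finset.range (K-1), ∑ b ∈ Finset.range (K-1),
            (({ω' | v a < U ω'} ∩ {ω' | v b < V ω'}).indicator (fun _ => Δ a b) ω) := by
      intro ω
      obtain ⟨i, hi, hUi⟩ := hUv ω
      obtain ⟨j, hj, hVj⟩ := hVv ω
      have hind : ∀ a b : ℕ,
          ({ω' | v a < U ω'} ∩ {ω' | v b < V ω'}).indicator (fun _ => Δ a b) ω
          = if a < i ∧ b < j then Δ a b else 0 := by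
        intro a b
        rw [Set.indicator_apply]
        congr 1
        simp only [Set.mem_inter_iff, Set.mem_setOf_eq, hUi, hVj, hv.lt_iff_lt, eq_iff_iff]
      simp_rw [hind]
      rw [sum_delta (fun a b => φ ![v a, v b]) K i j hi hj]
      rw [hUi, hVj]
      ring
    have hSU : ∀ ω, U ω ∈ S := fun ω => by
      obtain ⟨i, hi, h⟩ := hUv ω
      exact Finset.mem_image.2 ⟨i, Finset.mem_range.2 hi, h.symm⟩
    have hSV : ∀ ω, V ω ∈ S := fun ω => by
      obtain ⟨i, hi, h⟩ := hVv ω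
      exact Finset.mem_image.2 ⟨i, Finset.mem_range.2 hi, h.symm⟩
    -- integrability facts
    have hint_of : ∀ (f : Ω → ℝ), Measurable f → (∀ ω, |f ω| ≤ C) → Integrable f μ := by
      intro f hf hfC
      exact ⟨hf.aestronglyMeasurable, HasFiniteIntegral.of_bounded
        (ae_of_all _ fun ω => by simpa [Real.norm_eq_abs] using hfC ω)⟩
    have hmeas1 : Measurable fun ω => φ ![v 0, V ω] :=
      measurable_comp_finRange S hSV (fun a _ => hV (measurableSet_singleton a))
        (fun y => φ ![v 0, y])
    have hmeas2 : Measurable fun ω => φ ![U ω, v 0] :=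
      measurable_comp_finRange S hSU (fun a _ => hU (measurableSet_singleton a))
        (fun y => φ ![y, v 0])
    have hint1 : Integrable (fun ω => φ ![v 0, V ω]) μ := hint_of _ hmeas1 (fun ω => hC _)
    have hint2 : Integrable (fun ω => φ ![U ω, v 0]) μ := hint_of _ hmeas2 (fun ω => hC _)
    have hEm : ∀ a b : ℕ, MeasurableSet ({ω | v a < U ω} ∩ {ω | v b < V ω}) := by
      intro a b
      exact (measurableSet_lt measurable_const hU).inter (measurableSet_lt measurable_const hV)
    have hintInd : ∀ a b : ℕ,
        Integrable (fun ω => ({ω' | v a < U ω'} ∩ {ω' | v b < V ω'}).indicator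
          (fun _ => Δ a b) ω) μ := by
      intro a b
      exact (integrable_indicator_iff (hEm a b)).2
        (integrableOn_const (measure_ne_top _ _))
    have hintG : Integrable (fun ω => ∑ a ∈ Finset.range (K-1), ∑ b ∈ Finset.range (K-1),
        (({ω' | v a < U ω'} ∩ {ω' | v b < V ω'}).indicator (fun _ => Δ a b) ω)) μ := by
      apply integrable_finset_sum
      intro a _
      apply integrable_finset_sum
      intro b _
      exact hintInd a b
    calc ∫ ω, φ ![U ω, V ω] ∂μ
        = ∫ ω, (φ ![v 0, V ω] + φ ![U ω, v 0] - φ ![v 0, v 0]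
          + ∑ a ∈ Finset.range (K-1), ∑ b ∈ Finset.range (K-1),
            (({ω' | v a < U ω'} ∩ {ω' | v b < V ω'}).indicator (fun _ => Δ a b) ω)) ∂μ := by
          exact integral_congr_ae (ae_of_all _ key)
      _ = (∫ ω, φ ![v 0, V ω] ∂μ) + (∫ ω, φ ![U ω, v 0] ∂μ) - φ ![v 0, v 0]
          + ∑ a ∈ Finset.range (K-1), ∑ b ∈ Finset.range (K-1),
            Δ a b * (μ ({ω | v a < U ω} ∩ {ω | v b < V ω})).toReal := by
          have hintAB : Integrable (fun ω => φ ![v 0, V ω] + φ ![U ω, v 0]) μ :=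
            hint1.add hint2
          have hintABc : Integrable
              (fun ω => φ ![v 0, V ω] + φ ![U ω, v 0] - φ ![v 0, v 0]) μ :=
            hintAB.sub (integrable_const _)
          rw [integral_add hintABc hintG, integral_sub hintAB (integrable_const _),
            integral_add hint1 hint2, integral_const]
          congr 1
          · simp [measure_univ]
          · rw [integral_finset_sum _ (fun a _ => integrable_finset_sum _ (fun b _ => hintInd a b))]
            refine Finset.sum_congr rfl fun a _ => ?_
            rw [integral_finset_sum _ (fun b _ => hintInd a b)]
            refine Finset.sum_congr rfl fun b _ => ?_
            rw [integral_indicator_const _ (hEm a b), smul_eq_mul, mul_comm, measureReal_def]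
  -- apply the decomposition to both sides
  rw [main X Y hX hY hXv hYv, main X' Y' hX' hY' hX'v hY'v]
  have hmarg1 : ∫ ω, φ ![v 0, Y ω] ∂μ = ∫ ω, φ ![v 0, Y' ω] ∂μ := by
    rw [integral_comp_finRange S hSY (fun a _ => hY (measurableSet_singleton a)) (fun y => φ ![v 0, y]),
      integral_comp_finRange S hSY' (fun a _ => hY' (measurableSet_singleton a)) (fun y => φ ![v 0, y])]
    exact Finset.sum_congr rfl fun a _ => by rw [hmY a]
  have hmarg2 : ∫ ω, φ ![X ω, v 0] ∂μ = ∫ ω, φ ![X' ω, v 0] ∂μ := by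
    rw [integral_comp_finRange S hSX (fun a _ => hX (measurableSet_singleton a)) (fun y => φ ![y, v 0]),
      integral_comp_finRange S hSX' (fun a _ => hX' (measurableSet_singleton a)) (fun y => φ ![y, v 0])]
    exact Finset.sum_congr rfl fun a _ => by rw [hmX a]
  rw [hmarg1, hmarg2]
  refine add_le_add_right (Finset.sum_le_sum fun a _ => Finset.sum_le_sum fun b _ => ?_) _
  exact mul_le_mul_of_nonneg_left
    ((ENNReal.toReal_le_toReal (measure_ne_top _ _) (measure_ne_top _ _)).2
      (hsurv (v a) (v b))) (hΔ0 a b)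

lemma gdisc_tendsto_aux (x : ℝ) :
    Tendsto (fun n => gdisc n x) atTop (nhds x) ∧ (∀ᶠ n in atTop, x ≤ gdisc n x) := by
  have hev : ∀ᶠ n in atTop, x ≤ gdisc n x ∧ gdisc n x ≤ x + ((2:ℝ) ^ n)⁻¹ := by
    filter_upwards [eventually_ge_atTop ⌈|x|⌉₊] with n hn
    exact gdisc_bounds n x ((Nat.le_ceil _).trans (Nat.cast_le.2 hn))
  constructor
  · have h2 : Tendsto (fun n : ℕ => x + ((2:ℝ) ^ n)⁻¹) atTop (nhds (x + 0)) := by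
      refine tendsto_const_nhds.add ?_
      have := tendsto_pow_atTop_nhds_zero_of_lt_one (by norm_num : (0:ℝ) ≤ 1/2)
        (by norm_num : (1:ℝ)/2 < 1)
      refine this.congr fun n => ?_
      rw [one_div, inv_pow]
    rw [add_zero] at h2
    refine tendsto_of_tendsto_of_tendsto_of_le_of_le' tendsto_const_nhds h2 ?_ ?_
    · filter_upwards [hev] with n h; exact h.1
    · filter_upwards [hev] with n h; exact h.2
  · filter_upwards [hev] with n h; exact h.1

lemma smDiamondOrd_of_survival {Ω : Type*} [MeasurableSpace Ω] (μ : Measure Ω)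
    [IsProbabilityMeasure μ] {X Y X' Y' : Ω → ℝ}
    (hX : Measurable X) (hY : Measurable Y) (hX' : Measurable X') (hY' : Measurable Y')
    (hIX : IdentDistrib X X' μ μ) (hIY : IdentDistrib Y Y' μ μ)
    (hsurv : ∀ s t : ℝ, μ ({ω | s < X ω} ∩ {ω | t < Y ω}) ≤
      μ ({ω | s < X' ω} ∩ {ω | t < Y' ω})) :
    SmDiamondOrd μ ![X, Y] ![X', Y'] := by
  rintro φ hsm ⟨C, hC⟩ hrc
  -- rewrite the vector applications
  have hvec : ∀ (U V : Ω → ℝ), (fun ω => φ (fun i => ![U, V] i ω)) =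
      fun ω => φ ![U ω, V ω] := by
    intro U V
    funext ω
    congr 1
    funext i
    fin_cases i <;> rfl
  rw [hvec X Y, hvec X' Y']
  -- pointwise convergence of φ along the discretization
  have hφt : ∀ x y : ℝ, Tendsto (fun n => φ ![gdisc n x, gdisc n y]) atTop
      (nhds (φ ![x, y])) := by
    intro x y
    refine ((hrc ![x, y]).tendsto).comp ?_
    rw [tendsto_nhdsWithin_iff]
    constructor
    · rw [tendsto_pi_nhds]
      intro i
      fin_cases i
      · simpa using (gdisc_tendsto_aux x).1
      · simpa using (gdisc_tendsto_aux y).1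
    · filter_upwards [(gdisc_tendsto_aux x).2, (gdisc_tendsto_aux y).2] with n h1 h2
      intro i
      fin_cases i
      · simpa using h1
      · simpa using h2
  -- measurability of discretized compositions
  have hmeasF : ∀ (U V : Ω → ℝ), Measurable U → Measurable V → ∀ n : ℕ,
      Measurable (fun ω => φ ![gdisc n (U ω), gdisc n (V ω)]) := by
    intro U V hU hV n
    set S : Finset ℝ := (Finset.range (Kg n)).image (vg n) with hS
    have hgrid : ∀ z : ℝ, gdisc n z ∈ S := by
      intro z
      obtain ⟨i, hi, h⟩ := gdisc_mem_grid n z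
      exact Finset.mem_image.2 ⟨i, Finset.mem_range.2 hi, h.symm⟩
    have := measurable_comp_finRange (W := fun ω => (gdisc n (U ω), gdisc n (V ω)))
      (S ×ˢ S) (fun ω => Finset.mem_product.2 ⟨hgrid _, hgrid _⟩)
      (fun p _ => by
        have hpre : (fun ω => (gdisc n (U ω), gdisc n (V ω))) ⁻¹' {p} =
            ((fun ω => gdisc n (U ω)) ⁻¹' {p.1}) ∩ ((fun ω => gdisc n (V ω)) ⁻¹' {p.2}) := by
          ext ω
          simp [Prod.ext_iff]
        rw [hpre]
        exact (((gdisc_mono n).measurable.comp hU) (measurableSet_singleton _)).inter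
          (((gdisc_mono n).measurable.comp hV) (measurableSet_singleton _)))
      (fun p => φ ![p.1, p.2])
    exact this
  have hmeasXY : Measurable (fun ω => φ ![X ω, Y ω]) :=
    measurable_of_tendsto_metrizable (fun n => hmeasF X Y hX hY n)
      (tendsto_pi_nhds.2 fun ω => hφt (X ω) (Y ω))
  have hmeasXY' : Measurable (fun ω => φ ![X' ω, Y' ω]) :=
    measurable_of_tendsto_metrizable (fun n => hmeasF X' Y' hX' hY' n)
      (tendsto_pi_nhds.2 fun ω => hφt (X' ω) (Y' ω))
  -- integral convergence
  have hconv : ∀ (U V : Ω → ℝ), Measurable U → Measurable V →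
      Tendsto (fun n => ∫ ω, φ ![gdisc n (U ω), gdisc n (V ω)] ∂μ) atTop
        (nhds (∫ ω, φ ![U ω, V ω] ∂μ)) := by
    intro U V hU hV
    refine tendsto_integral_of_dominated_convergence (bound := fun _ => C)
      (fun n => (hmeasF U V hU hV n).aestronglyMeasurable) (integrable_const C)
      (fun n => ae_of_all _ fun ω => by simpa [Real.norm_eq_abs] using hC _)
      (ae_of_all _ fun ω => hφt (U ω) (V ω))
  -- per-n comparison via the discrete lemma
  have hstep : ∀ n : ℕ, ∫ ω, φ ![gdisc n (X ω), gdisc n (Y ω)] ∂μ ≤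
      ∫ ω, φ ![gdisc n (X' ω), gdisc n (Y' ω)] ∂μ := by
    intro n
    refine core_discrete hsm hC (vg_strictMono n) (K := Kg n)
      ((gdisc_mono n).measurable.comp hX) ((gdisc_mono n).measurable.comp hY)
      ((gdisc_mono n).measurable.comp hX') ((gdisc_mono n).measurable.comp hY')
      (fun ω => gdisc_mem_grid n (X ω)) (fun ω => gdisc_mem_grid n (Y ω))
      (fun ω => gdisc_mem_grid n (X' ω)) (fun ω => gdisc_mem_grid n (Y' ω))
      (fun c => (hIX.comp (gdisc_mono n).measurable).measure_mem_eq
        (measurableSet_singleton c))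
      (fun c => (hIY.comp (gdisc_mono n).measurable).measure_mem_eq
        (measurableSet_singleton c))
      ?_
    intro s t
    have hUset : {ω | s < gdisc n (X ω)} = X ⁻¹' {x | s < gdisc n x} := rfl
    have hVset : {ω | t < gdisc n (Y ω)} = Y ⁻¹' {x | t < gdisc n x} := rfl
    have hU'set : {ω | s < gdisc n (X' ω)} = X' ⁻¹' {x | s < gdisc n x} := rfl
    have hV'set : {ω | t < gdisc n (Y' ω)} = Y' ⁻¹' {x | t < gdisc n x} := rfl
    rw [hUset, hVset, hU'set, hV'set]
    rcases gdisc_upset n s with hU | hU | ⟨a, hU⟩ <;>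
      rcases gdisc_upset n t with hV | hV | ⟨b, hV⟩ <;>
      rw [hU, hV]
    all_goals try simp only [Set.preimage_empty, Set.preimage_univ, Set.empty_inter,
      Set.inter_empty, Set.univ_inter, Set.inter_univ, measure_empty, le_refl, zero_le]
    · exact le_of_eq (hIY.measure_mem_eq measurableSet_Ioi)
    · exact le_of_eq (hIX.measure_mem_eq measurableSet_Ioi)
    · exact hsurv a b
  -- put it together
  rw [eexp_eq_integral_s15 hmeasXY.aestronglyMeasurable (fun ω => hC _),
    eexp_eq_integral_s15 hmeasXY'.aestronglyMeasurable (fun ω => hC _)]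
  exact EReal.coe_le_coe_iff.2
    (le_of_tendsto_of_tendsto' (hconv X Y hX hY) (hconv X' Y' hX' hY') hstep)


/-- `(X^ct, Y^ct) ≤_sm⋄ (X, Y) ≤_sm⋄ (X^co, Y^co)` for a comonotonic version
`(X^co, Y^co)` and a counter-monotonic version `(X^ct, Y^ct)` of `(X, Y)`. -/
theorem smDiamondOrd_bounds
    {Ω : Type*} [MeasurableSpace Ω] (μ : Measure Ω) [IsProbabilityMeasure μ]
    (hμ : Atomless μ) (X Y Xco Yco Xct Yct : Ω → ℝ)
    (hX : Measurable X) (hY : Measurable Y)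
    (hXco : Measurable Xco) (hYco : Measurable Yco)
    (hXct : Measurable Xct) (hYct : Measurable Yct)
    (hco : Comonotone μ Xco Yco)
    (hcoX : IdentDistrib Xco X μ μ) (hcoY : IdentDistrib Yco Y μ μ)
    (hct : CounterMonotone μ Xct Yct)
    (hctX : IdentDistrib Xct X μ μ) (hctY : IdentDistrib Yct Y μ μ) :
    SmDiamondOrd μ ![Xct, Yct] ![X, Y] ∧ SmDiamondOrd μ ![X, Y] ![Xco, Yco] := by
  constructor
  · exact smDiamondOrd_of_survival μ hXct hYct hX hY hctX hctY
      (fun s t => countermonotone_survival hY hct hctX hctY s t)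
  · exact smDiamondOrd_of_survival μ hX hY hXco hYco hcoX.symm hcoY.symm
      (fun s t => comonotone_survival hco hcoX hcoY s t)
end

section
/- Let d ∈ ℕ and let φ : ℝ^d → ℝ be a supermodular function with φ(0, …, 0) = 0. Then for every x = (x₁, …, x_d) with x_i ≥ 0 for all i, φ(x₁, …, x_d) ≥ Σ_{i=1}^d φ(x_i e_i), where e_i = (0, …, 0, 1, 0, …, 0) is the i-th standard basis vector of ℝ^d. -/
/-- A supermodular `φ` with `φ(0) = 0` satisfies
`φ(x₁, …, x_d) ≥ ∑ i, φ(x_i e_i)` for every `x` with nonnegative coordinates. -/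
theorem supermodular_ge_sum_single (d : ℕ) (φ : (Fin d → ℝ) → ℝ)
    (hφ : Supermodular φ) (h0 : φ 0 = 0)
    (x : Fin d → ℝ) (hx : ∀ i, 0 ≤ x i) :
    ∑ i, φ (Pi.single i (x i)) ≤ φ x := by
  set ind : Finset (Fin d) → (Fin d → ℝ) := fun s j => if j ∈ s then x j else 0 with hind
  have key : ∀ s : Finset (Fin d), ∑ i ∈ s, φ (Pi.single i (x i)) ≤ φ (ind s) := by
    intro s
    induction s using Finset.cons_induction with
    | empty =>
      simp only [Finset.sum_empty]
      have : ind ∅ = 0 := by funext j; simp [hind]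
      rw [this, h0]
    | cons i s hi ih =>
      rw [Finset.sum_cons]
      have h1 : ind s ⊓ Pi.single i (x i) = 0 := by
        funext j
        by_cases hji : j = i
        · subst hji
          simp [hind, hi, Pi.inf_apply, hx j]
        · simp [hind, Pi.inf_apply, Pi.single_eq_of_ne hji, min_eq_right (hx j),
            apply_ite (min · (0:ℝ)), hx j]
      have h2 : ind s ⊔ Pi.single i (x i) = ind (Finset.cons i s hi) := by
        funext j
        by_cases hji : j = i
        · subst hji
          simp [hind, hi, Pi.sup_apply, hx j]
        · simp [hind, Pi.sup_apply, Pi.single_eq_of_ne hji, max_eq_left (hx j), hji,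
            apply_ite (max · (0:ℝ)), hx j]
      have := hφ (ind s) (Pi.single i (x i))
      rw [h1, h2, h0] at this
      linarith
  have hfin : ind Finset.univ = x := by funext j; simp [hind]
  calc ∑ i, φ (Pi.single i (x i)) ≤ φ (ind Finset.univ) := key Finset.univ
    _ = φ x := by rw [hfin]
end
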